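/- arXiv:0802.4345 — 9 statements merged into one kernel-verified Lean document; each statement's English description precedes it below -/
import Mathlib

section
/- Let V be a finite-dimensional real vector space equipped with a nondegenerate symmetric bilinear form g, and let f : V → V be a surjective map (no linearity or continuity is assumed) such that g(f(v), f(w)) = g(v, w) for all v, w ∈ V. Then f is linear. -/
/-!
Since `f` preserves the form, `g (f (v + w)) (f u) = g (f v + f w) (f u)` and
`g (f (c • v)) (f u) = g (c • f v) (f u)` for every `u`. As `f` is surjective, the `f u` exhaust
the space, so nondegeneracy forces `f (v + w) = f v + f w` and `f (c • v) = c • f v`.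
-/

namespace LinearMap

variable {R M N P : Type*} [CommRing R] [AddCommGroup N] [Module R N] [AddCommGroup P]
  [Module R P]

theorem SeparatingLeft.eq_of_forall_apply_comp_eq {B : N →ₗ[R] N →ₗ[R] P}
    (hB : B.SeparatingLeft) {f : M → N} (hf : Function.Surjective f) {x y : N}
    (h : ∀ u, B x (f u) = B y (f u)) : x = y := by
  refine sub_eq_zero.mp (hB _ fun z => ?_)
  obtain ⟨u, rfl⟩ := hf z
  rw [map_sub, sub_apply, h, sub_self]

theorem isLinearMap_of_surjective_of_apply_apply_eq [AddCommGroup M] [Module R M]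
    {B : M →ₗ[R] M →ₗ[R] P} {B' : N →ₗ[R] N →ₗ[R] P} (hB' : B'.SeparatingLeft) {f : M → N}
    (hf : Function.Surjective f) (hfB : ∀ v w, B' (f v) (f w) = B v w) :
    IsLinearMap R f where
  map_add v w := hB'.eq_of_forall_apply_comp_eq hf fun u => by
    simp only [hfB, map_add, add_apply]
  map_smul c v := hB'.eq_of_forall_apply_comp_eq hf fun u => by
    simp only [hfB, map_smul, smul_apply]

end LinearMap

theorem surjective_bilin_preserving_isLinear_general
    {V : Type*} [AddCommGroup V] [Module ℝ V]
    (g : V →ₗ[ℝ] V →ₗ[ℝ] ℝ)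
    (hnondeg : ∀ v : V, (∀ w : V, g v w = 0) → v = 0)
    (f : V → V) (hsurj : Function.Surjective f)
    (hiso : ∀ v w : V, g (f v) (f w) = g v w) :
    IsLinearMap ℝ f :=
  LinearMap.isLinearMap_of_surjective_of_apply_apply_eq hnondeg hsurj hiso

/-- A surjective map on a finite-dimensional real vector space that
preserves a nondegenerate symmetric bilinear form is linear. -/
theorem surjective_bilin_preserving_isLinear
    {V : Type*} [AddCommGroup V] [Module ℝ V] [FiniteDimensional ℝ V]
    (g : V →ₗ[ℝ] V →ₗ[ℝ] ℝ)
    (hsymm : ∀ v w : V, g v w = g w v)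
    (hnondeg : ∀ v : V, (∀ w : V, g v w = 0) → v = 0)
    (f : V → V) (hsurj : Function.Surjective f)
    (hiso : ∀ v w : V, g (f v) (f w) = g v w) :
    IsLinearMap ℝ f :=
  surjective_bilin_preserving_isLinear_general g hnondeg f hsurj hiso
end

section
/- Let V be an n-dimensional real vector space with a nondegenerate symmetric bilinear form g of arbitrary signature. Every linear isometry φ of (V, g), i.e. every linear bijection with g(φ(v), φ(w)) = g(v, w) for all v, w ∈ V, is the composition of at most n reflections at nondegenerate hyperplanes. -/
/-!
Induction on `n = dim V`. If `φ` fixes an anisotropic vector `v`, it restricts to an isometry of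
the nondegenerate hyperplane `v^⊥`, a product of at most `n - 1` reflections. If `φ v - v` is
anisotropic for some anisotropic `v`, the reflection at `φ v - v` maps `φ v` to `v`, which reduces
to the first case at the cost of one reflection.

Otherwise `φ v - v` is isotropic for every anisotropic `v`, hence, anisotropic vectors being
Zariski dense, for every `v`. Then the image of `φ - 1` is totally isotropic, which forces
`(φ - 1)² = 0`, so `det φ = 1`. The kernel of `φ - 1` contains its image, so has dimension at
least `n / 2`, and is totally isotropic (no anisotropic vector is fixed), so has dimension at
most `n / 2`: thus `n` is even. For anisotropic `u`, composing `φ` with the reflections at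
`φ u + u` and at `u` gives an isometry of determinant `1` fixing `u`: a product of at most `n - 1`
reflections, hence by parity of at most `n - 2`.
-/

open LinearMap Polynomial
open Module (finrank)

theorem Polynomial.eq_zero_of_eval_eq_zero_of_eval_ne_zero {R : Type*} [CommRing R] [IsDomain R]
    [Infinite R] {p q : R[X]} (hp : p ≠ 0) (h : ∀ t, p.eval t ≠ 0 → q.eval t = 0) : q = 0 :=
  eq_zero_of_infinite_isRoot q <|
    (p.finite_setOfPred_isRoot hp).infinite_compl.mono fun t ht ↦ h t ht

theorem LinearMap.det_one_add_of_isNilpotent {R M : Type*} [CommRing R] [IsDomain R]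
    [AddCommGroup M] [Module R M] [Module.Free R M] [Module.Finite R M] {f : Module.End R M}
    (hf : IsNilpotent f) : LinearMap.det (1 + f) = 1 := by
  have := (-f).eval_charpoly 1
  rw [hf.neg.charpoly_eq_X_pow_finrank] at this
  simpa [sub_neg_eq_add] using this.symm

namespace LinearMap.BilinForm

variable {K V : Type*} [Field K] [AddCommGroup V] [Module K V] {B : LinearMap.BilinForm K V}

theorem IsSymm.apply_add_smul_self (hB : B.IsSymm) (x y : V) (t : K) :
    B (x + t • y) (x + t • y) = B x x + 2 * B x y * t + B y y * t ^ 2 := by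
  simp only [map_add, map_smul, LinearMap.add_apply, LinearMap.smul_apply, smul_eq_mul, hB.eq y x]
  ring

theorem le_orthogonal_self_of_forall_apply_self_eq_zero [NeZero (2 : K)] (hB : B.IsSymm)
    {U : Submodule K V} (hU : ∀ x ∈ U, B x x = 0) : U ≤ B.orthogonal U := by
  have hBU : B.restrict U = 0 := by
    by_contra hne
    let := invertibleOfNonzero (two_ne_zero : (2 : K) ≠ 0)
    obtain ⟨x, hx⟩ := exists_bilinForm_self_ne_zero hne (isSymm_iff.1 (hB.restrict U))
    exact hx (hU x x.2)
  intro x hx y hy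
  exact congr($hBU ⟨y, hy⟩ ⟨x, hx⟩)

variable (B) in
/-- For isotropic `v` the junk value `2 / 0 = 0` makes this the identity. -/
noncomputable def reflection (v : V) : V →ₗ[K] V :=
  transvection (-(2 / B v v) • B.flip v) v

theorem reflection_apply (v x : V) : B.reflection v x = x - (2 * B x v / B v v) • v := by
  rw [reflection, transvection.apply, sub_eq_add_neg, ← neg_smul]
  congr 2
  simp only [smul_apply, flip_apply, smul_eq_mul]
  ring

theorem reflection_apply_self {v : V} (hv : B v v ≠ 0) : B.reflection v v = -v := by
  rw [reflection_apply, mul_div_assoc, div_self hv, mul_one, two_smul, sub_add_cancel_left]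

theorem reflection_apply_of_apply_eq_zero {v x : V} (hx : B x v = 0) : B.reflection v x = x := by
  rw [reflection_apply, hx, mul_zero, zero_div, zero_smul, sub_zero]

theorem reflection_mul_self {v : V} (hv : B v v ≠ 0) : B.reflection v * B.reflection v = 1 := by
  ext x
  simp only [Module.End.mul_apply, Module.End.one_apply, reflection_apply, map_sub, map_smul]
  field_simp
  module

theorem isOrthogonal_reflection (hB : B.IsSymm) (v : V) : B.IsOrthogonal (B.reflection v) := by
  intro x y
  rcases eq_or_ne (B v v) 0 with hv | hv
  · simp [reflection_apply, hv]
  simp only [reflection_apply, map_sub, map_smul, LinearMap.sub_apply, LinearMap.smul_apply,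
    smul_eq_mul, hB.eq v y]
  field_simp
  ring

theorem det_reflection [FiniteDimensional K V] {v : V} (hv : B v v ≠ 0) :
    LinearMap.det (B.reflection v) = -1 := by
  rw [reflection, transvection.det, LinearMap.smul_apply, flip_apply, smul_eq_mul, neg_mul,
    div_mul_cancel₀ _ hv]
  norm_num

theorem reflection_sub_apply (hB : B.IsSymm) {x y : V} (hxy : B x x = B y y)
    (h : B (x - y) (x - y) ≠ 0) : B.reflection (x - y) x = y := by
  have : 2 * B x (x - y) = B (x - y) (x - y) := by
    simp only [map_sub, LinearMap.sub_apply, hB.eq y x, hxy]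
    ring
  rw [reflection_apply, this, div_self h, one_smul, sub_sub_cancel]

variable (B) in
noncomputable def reflectionProd (l : List V) : V →ₗ[K] V :=
  (l.map B.reflection).prod

@[simp]
theorem reflectionProd_nil : B.reflectionProd [] = 1 := rfl

@[simp]
theorem reflectionProd_cons (v : V) (l : List V) :
    B.reflectionProd (v :: l) = B.reflection v * B.reflectionProd l := rfl

theorem reflectionProd_apply (l : List V) (x : V) :
    B.reflectionProd l x = l.foldr (fun v y ↦ y - (2 * B y v / B v v) • v) x := by
  induction l with
  | nil => rfl
  | cons v l ih => rw [reflectionProd_cons, Module.End.mul_apply, ih, reflection_apply]; rfl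

theorem reflectionProd_apply_of_forall_apply_eq_zero {l : List V} {x : V}
    (hx : ∀ v ∈ l, B x v = 0) : B.reflectionProd l x = x := by
  induction l with
  | nil => rfl
  | cons v l ih =>
    rw [reflectionProd_cons, Module.End.mul_apply, ih fun w hw ↦ hx w (List.mem_cons_of_mem v hw),
      reflection_apply_of_apply_eq_zero (hx v List.mem_cons_self)]

theorem coe_reflectionProd_restrict (W : Submodule K V) (l : List W) (x : W) :
    ((B.restrict W).reflectionProd l x : V) = B.reflectionProd (l.map (↑)) x := by
  induction l with
  | nil => rfl
  | cons v l ih =>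
    rw [reflectionProd_cons, Module.End.mul_apply, List.map_cons, reflectionProd_cons,
      Module.End.mul_apply, ← ih, reflection_apply, reflection_apply]
    rfl

theorem det_reflectionProd [FiniteDimensional K V] {l : List V} (hl : ∀ v ∈ l, B v v ≠ 0) :
    LinearMap.det (B.reflectionProd l) = (-1) ^ l.length := by
  induction l with
  | nil => simp
  | cons v l ih =>
    rw [reflectionProd_cons, map_mul, det_reflection (hl v List.mem_cons_self),
      ih fun w hw ↦ hl w (List.mem_cons_of_mem v hw), List.length_cons, pow_succ']

variable (B) in
def IsProdOfReflections (k : ℕ) (f : V →ₗ[K] V) : Prop :=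
  ∃ l : List V, l.length ≤ k ∧ (∀ v ∈ l, B v v ≠ 0) ∧ f = B.reflectionProd l

namespace IsProdOfReflections

variable {k : ℕ} {f : V →ₗ[K] V}

theorem mono (h : B.IsProdOfReflections k f) {m : ℕ} (hkm : k ≤ m) :
    B.IsProdOfReflections m f :=
  let ⟨l, hlen, hl, hf⟩ := h
  ⟨l, hlen.trans hkm, hl, hf⟩

theorem of_reflection_mul {v : V} (hv : B v v ≠ 0)
    (h : B.IsProdOfReflections k (B.reflection v * f)) : B.IsProdOfReflections (k + 1) f := by
  obtain ⟨l, hlen, hl, hf⟩ := h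
  refine ⟨v :: l, Nat.succ_le_succ hlen, List.forall_mem_cons.2 ⟨hv, hl⟩, ?_⟩
  rw [reflectionProd_cons, ← hf, ← mul_assoc, reflection_mul_self hv, one_mul]

theorem of_det_ne [FiniteDimensional K V] (h : B.IsProdOfReflections (k + 1) f)
    (hdet : LinearMap.det f ≠ (-1) ^ (k + 1)) : B.IsProdOfReflections k f := by
  obtain ⟨l, hlen, hl, rfl⟩ := h
  refine ⟨l, ?_, hl, rfl⟩
  rcases hlen.lt_or_eq with hlt | heq
  · exact Nat.le_of_lt_succ hlt
  · rw [det_reflectionProd hl, heq] at hdet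
    exact (hdet rfl).elim

theorem of_restrict_orthogonal {v : V} (hv : B v v ≠ 0) (hfv : f v = v)
    (hW : ∀ x ∈ B.orthogonal (K ∙ v), f x ∈ B.orthogonal (K ∙ v))
    (h : (B.restrict (B.orthogonal (K ∙ v))).IsProdOfReflections k (f.restrict hW)) :
    B.IsProdOfReflections k f := by
  obtain ⟨l, hlen, hl, hf⟩ := h
  refine ⟨l.map (↑), by rwa [List.length_map], ?_, ?_⟩
  · simpa using hl
  ext x
  obtain ⟨a, ha, b, hb, rfl⟩ :=
    Submodule.mem_sup.1 (span_singleton_sup_orthogonal_eq_top hv ▸ Submodule.mem_top (x := x))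
  obtain ⟨c, rfl⟩ := Submodule.mem_span_singleton.1 ha
  have hfix : B.reflectionProd (l.map (↑)) (c • v) = c • v :=
    reflectionProd_apply_of_forall_apply_eq_zero fun _ hw ↦ by
      obtain ⟨w, -, rfl⟩ := List.mem_map.1 hw
      exact w.2 (c • v) ha
  rw [map_add, map_add, map_smul, hfv, hfix, ← coe_reflectionProd_restrict _ _ ⟨b, hb⟩,
    ← hf]
  rfl

end IsProdOfReflections

theorem apply_map_self_eq_zero_of_forall_anisotropic [Infinite K] (hB : B.IsSymm)
    {h : V →ₗ[K] V} {u : V} (hu : B u u ≠ 0) (H : ∀ x, B x x ≠ 0 → B (h x) (h x) = 0) (y : V) :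
    B (h y) (h y) = 0 := by
  -- `u + t • y` is anisotropic for all but finitely many `t`.
  let p : K[X] := C (B u u) + C (2 * B u y) * X + C (B y y) * X ^ 2
  let q : K[X] := C (2 * B (h u) (h y)) * X + C (B (h y) (h y)) * X ^ 2
  have hp : p ≠ 0 := fun hp0 ↦ hu (by simpa [p] using congr_arg (eval 0) hp0)
  have hq : q = 0 := eq_zero_of_eval_eq_zero_of_eval_ne_zero hp fun t ht ↦ by
    have := H (u + t • y) (by rw [hB.apply_add_smul_self]; simpa [p] using ht)
    rw [map_add, map_smul, hB.apply_add_smul_self, H u hu] at this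
    simpa [q] using this
  simpa [q] using congr_arg (coeff · 2) hq

theorem sub_one_mul_sub_one_eq_zero (hB : B.SeparatingRight) {f : V →ₗ[K] V}
    (hf : B.IsOrthogonal f) (hrange : ∀ x y, B (f x - x) (f y - y) = 0) :
    (f - 1) * (f - 1) = 0 := by
  have skew : ∀ a b, B a (f b - b) = -B (f a - a) b := fun a b ↦ by
    have := hrange a b
    simp only [map_sub, LinearMap.sub_apply, hf a b] at this ⊢
    linear_combination -this
  ext x
  refine hB _ fun w ↦ ?_
  simp only [Module.End.mul_apply, LinearMap.sub_apply, Module.End.one_apply]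
  rw [skew, hrange, neg_zero]

theorem even_finrank_of_ker_le_orthogonal [FiniteDimensional K V] (hB : B.Nondegenerate)
    {h : V →ₗ[K] V} (hh : h * h = 0) (hker : ker h ≤ B.orthogonal (ker h)) :
    Even (finrank K V) := by
  have h1 := finrank_range_add_finrank_ker h
  have h2 := Submodule.finrank_mono (range_le_ker_iff.2 hh)
  have h3 := Submodule.finrank_mono hker
  rw [finrank_orthogonal hB] at h3
  exact ⟨finrank K (ker h), by omega⟩

theorem isOrthogonal_reflection_mul (hB : B.IsSymm) (v : V) {f : V →ₗ[K] V}
    (hf : B.IsOrthogonal f) : B.IsOrthogonal (B.reflection v * f) := fun x y ↦ by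
  rw [Module.End.mul_apply, Module.End.mul_apply, isOrthogonal_reflection hB v, hf]

theorem apply_mem_orthogonal_span_singleton {f : V →ₗ[K] V} (hf : B.IsOrthogonal f) {v x : V}
    (hfv : f v = v) (hx : x ∈ B.orthogonal (K ∙ v)) : f x ∈ B.orthogonal (K ∙ v) := by
  intro w hw
  obtain ⟨c, rfl⟩ := Submodule.mem_span_singleton.1 hw
  have := hx _ hw
  rwa [← hf, map_smul, hfv] at this

section FiniteDimensional

variable [FiniteDimensional K V] {f : V →ₗ[K] V}

theorem isProdOfReflections_of_anisotropic_sub (hB : B.IsSymm) (hf : B.IsOrthogonal f)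
    (hfix : ∀ g : V →ₗ[K] V, B.IsOrthogonal g → ∀ v, B v v ≠ 0 → g v = v →
      B.IsProdOfReflections (finrank K V - 1) g)
    {v : V} (hv : B v v ≠ 0) (hz : B (f v - v) (f v - v) ≠ 0) :
    B.IsProdOfReflections (finrank K V) f := by
  have hpos : 0 < finrank K V :=
    Module.finrank_pos_iff_exists_ne_zero.2 ⟨v, ne_zero_of_not_isOrtho_self v hv⟩
  have := hfix _ (isOrthogonal_reflection_mul hB _ hf) v hv
    (reflection_sub_apply hB (hf v v) hz)
  exact (this.of_reflection_mul hz).mono (by omega)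

theorem isProdOfReflections_of_isotropic_sub [Infinite K] [NeZero (2 : K)] [Nontrivial V]
    (hB : B.IsSymm) (hnd : B.Nondegenerate) (hf : B.IsOrthogonal f)
    (hfix : ∀ g : V →ₗ[K] V, B.IsOrthogonal g → ∀ v, B v v ≠ 0 → g v = v →
      B.IsProdOfReflections (finrank K V - 1) g)
    (hnofix : ∀ v, B v v ≠ 0 → f v ≠ v)
    (hiso : ∀ v, B v v ≠ 0 → B (f v - v) (f v - v) = 0) :
    B.IsProdOfReflections (finrank K V) f := by
  let := invertibleOfNonzero (two_ne_zero : (2 : K) ≠ 0)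
  obtain ⟨u, hu⟩ := exists_bilinForm_self_ne_zero hnd.1.ne_zero (isSymm_iff.1 hB)
  have hrange : ∀ x y, B (f x - x) (f y - y) = 0 := by
    have := le_orthogonal_self_of_forall_apply_self_eq_zero hB (U := range (f - 1)) <| by
      rintro _ ⟨x, rfl⟩
      exact apply_map_self_eq_zero_of_forall_anisotropic hB hu hiso x
    exact fun x y ↦ this ⟨y, rfl⟩ _ ⟨x, rfl⟩
  have hsq : (f - 1) * (f - 1) = 0 := sub_one_mul_sub_one_eq_zero hnd.2 hf hrange
  have hdet : LinearMap.det f = 1 := by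
    have := det_one_add_of_isNilpotent (f := f - 1) ⟨2, by rw [sq, hsq]⟩
    rwa [add_sub_cancel] at this
  have heven : Even (finrank K V) := even_finrank_of_ker_le_orthogonal hnd hsq <|
    le_orthogonal_self_of_forall_apply_self_eq_zero hB fun x hx ↦ by
      by_contra hx'
      exact hnofix x hx' (sub_eq_zero.1 hx)
  have hz : B (f u + u) (f u + u) ≠ 0 := by
    have h1 := hiso u hu
    intro h0
    apply hu
    simp only [map_add, map_sub, LinearMap.add_apply, LinearMap.sub_apply, hf u u,
      hB.eq u (f u)] at h0 h1
    have : (2 : K) * (2 * B u u) = 0 := by linear_combination h0 + h1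
    simpa [two_ne_zero] using this
  have hρ : B.reflection (f u + u) (f u) = -u := by
    simpa using reflection_sub_apply hB (y := -u) (by simpa using hf u u) (by simpa using hz)
  set g := B.reflection u * (B.reflection (f u + u) * f)
  have hgu : g u = u := by
    simp only [g, Module.End.mul_apply, hρ, map_neg, reflection_apply_self hu, neg_neg]
  have hdetg : LinearMap.det g = 1 := by
    simp only [g, map_mul, det_reflection hu, det_reflection hz, hdet]
    norm_num
  have hpos : 0 < finrank K V := Module.finrank_pos
  have hn : finrank K V - 1 = finrank K V - 2 + 1 := by
    obtain ⟨m, hm⟩ := heven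
    omega
  have hg := hfix g (isOrthogonal_reflection_mul hB u (isOrthogonal_reflection_mul hB _ hf)) u hu
    hgu
  rw [hn] at hg
  have hg' := hg.of_det_ne <| by
    rw [hdetg, ← hn, (Nat.Even.sub_odd hpos heven odd_one).neg_one_pow]
    intro h
    exact two_ne_zero (by linear_combination h : (2 : K) = 0)
  exact ((hg'.of_reflection_mul hu).of_reflection_mul hz).mono (by omega)

theorem isProdOfReflections_finrank [Infinite K] [NeZero (2 : K)] (hB : B.IsSymm)
    (hnd : B.Nondegenerate) (hf : B.IsOrthogonal f) : B.IsProdOfReflections (finrank K V) f := by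
  induction hn : finrank K V using Nat.strong_induction_on generalizing V with
  | _ n ih =>
  subst hn
  have hfix : ∀ g : V →ₗ[K] V, B.IsOrthogonal g → ∀ v, B v v ≠ 0 → g v = v →
      B.IsProdOfReflections (finrank K V - 1) g := by
    intro g hg v hv hgv
    have hv0 : v ≠ 0 := ne_zero_of_not_isOrtho_self v hv
    have hW := fun x ↦ apply_mem_orthogonal_span_singleton hg (x := x) hgv
    have hrank : finrank K (B.orthogonal (K ∙ v)) = finrank K V - 1 := by
      rw [finrank_orthogonal hnd, finrank_span_singleton (K := K) hv0]
    refine .of_restrict_orthogonal hv hgv hW <| ih _ ?_ (hB.restrict _)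
      (restrict_nondegenerate_orthogonal_spanSingleton B hnd hB.isRefl hv)
      (fun x y ↦ hg x y) hrank
    have := Module.finrank_pos_iff_exists_ne_zero (R := K).2 ⟨v, hv0⟩
    omega
  by_cases hfixed : ∃ v, B v v ≠ 0 ∧ f v = v
  · obtain ⟨v, hv, hfv⟩ := hfixed
    exact (hfix f hf v hv hfv).mono (Nat.sub_le _ _)
  by_cases hmoved : ∃ v, B v v ≠ 0 ∧ B (f v - v) (f v - v) ≠ 0
  · obtain ⟨v, hv, hz⟩ := hmoved
    exact isProdOfReflections_of_anisotropic_sub hB hf hfix hv hz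
  push Not at hfixed hmoved
  cases subsingleton_or_nontrivial V
  · exact ⟨[], Nat.zero_le _, by simp, Subsingleton.elim _ _⟩
  · exact isProdOfReflections_of_isotropic_sub hB hnd hf hfix hfixed hmoved

end FiniteDimensional

end LinearMap.BilinForm

theorem cartan_dieudonne_general
    {V : Type*} [AddCommGroup V] [Module ℝ V] [FiniteDimensional ℝ V]
    {n : ℕ} (hdim : Module.finrank ℝ V = n)
    (g : V →ₗ[ℝ] V →ₗ[ℝ] ℝ)
    (hsymm : ∀ v w : V, g v w = g w v)
    (hnondeg : ∀ v : V, (∀ w : V, g v w = 0) → v = 0)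
    (φ : V →ₗ[ℝ] V)
    (hiso : ∀ v w : V, g (φ v) (φ w) = g v w) :
    ∃ l : List V, l.length ≤ n ∧ (∀ v ∈ l, g v v ≠ 0) ∧
      ∀ x : V, φ x = l.foldr (fun v y => y - (2 * g y v / g v v) • v) x := by
  subst hdim
  have hB : LinearMap.BilinForm.IsSymm g := ⟨hsymm⟩
  have hnd : LinearMap.BilinForm.Nondegenerate g :=
    hB.isRefl.nondegenerate_iff_separatingLeft.2 hnondeg
  obtain ⟨l, hlen, hl, rfl⟩ := LinearMap.BilinForm.isProdOfReflections_finrank hB hnd hiso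
  exact ⟨l, hlen, hl, LinearMap.BilinForm.reflectionProd_apply l⟩

/-- **Cartan–Dieudonné.** Every linear isometry of an `n`-dimensional real
vector space with a nondegenerate symmetric bilinear form is the composition of at most
`n` reflections at nondegenerate hyperplanes. -/
theorem cartan_dieudonne
    {V : Type*} [AddCommGroup V] [Module ℝ V] [FiniteDimensional ℝ V]
    {n : ℕ} (hdim : Module.finrank ℝ V = n)
    (g : V →ₗ[ℝ] V →ₗ[ℝ] ℝ)
    (hsymm : ∀ v w : V, g v w = g w v)
    (hnondeg : ∀ v : V, (∀ w : V, g v w = 0) → v = 0)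
    (φ : V →ₗ[ℝ] V) (hbij : Function.Bijective φ)
    (hiso : ∀ v w : V, g (φ v) (φ w) = g v w) :
    ∃ l : List V, l.length ≤ n ∧ (∀ v ∈ l, g v v ≠ 0) ∧
      ∀ x : V, φ x = l.foldr (fun v y => y - (2 * g y v / g v v) • v) x :=
  cartan_dieudonne_general hdim g hsymm hnondeg φ hiso
end

section
/- (Alexandrov–Zeeman) Let n ≥ 3. Let F : ℝⁿ → ℝⁿ be a bijection such that for all p, q ∈ ℝⁿ: if p > q then F(p) > F(q), and if p > q then F⁻¹(p) > F⁻¹(q), where p > q means that p − q is timelike and future-pointing. Then F is the composition of an orthochronous Poincaré transformation with a dilation: there exist λ > 0, a vector m ∈ ℝⁿ, and a linear map Λ : ℝⁿ → ℝⁿ satisfying g(Λv, Λw) = g(v, w) for all v, w and mapping future-pointing timelike vectors to future-pointing timelike vectors, such that F(p) = λ·Λ(p) + m for all p ∈ ℝⁿ. -/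
/-- The Minkowski bilinear form of signature `(1, n-1)` on `ℝⁿ`:
`g v w = v⁰w⁰ - ∑_{i=1}^{n-1} vⁱwⁱ`. -/
noncomputable def minkG {n : ℕ} (v w : Fin n → ℝ) : ℝ :=
  ∑ i : Fin n, if (i : ℕ) = 0 then v i * w i else -(v i * w i)

/-- `v` is timelike and future pointing: `g(v,v) > 0` and `v⁰ > 0`. -/
def FutureTimelike {n : ℕ} (v : Fin (n + 1) → ℝ) : Prop :=
  0 < minkG v v ∧ 0 < v 0

/-!
The chronological order determines the causal order (the causal future of `x` is the set of
points whose chronological future lies in that of `x`) and hence lightlike separation. A null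
hyperplane `{z | g(z - x, a) = 0}` is the set of points timelike-separated from no point of the
null line `x + ℝ a`, so `F` maps null hyperplanes to null hyperplanes, and the image direction
does not depend on the base point. Hence for every future null `a` there is a strictly
increasing `φ` with `g(F z, F a - F 0) = φ (g(z, a))`. Comparing these level functions along a
null frame `f₀ = e₀ + e₁`, `fᵢ = e₀ - eᵢ` with the one of the null vector
`e₀ + e_J = f₀ + f₁ - f_J` (`J ≥ 2`, which needs `n ≥ 3`) gives a Pexider equation, so each
`φ` is affine and so is `F`. Its linear part preserves the light cone, hence scales `g` by some
`μ > 0`, and dividing it by `√μ` leaves an orthochronous Lorentz transformation.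
-/

open Finset

section FunctionalEquation

theorem eq_mul_of_add_of_monotone {φ : ℝ → ℝ} (hadd : ∀ x y, φ (x + y) = φ x + φ y)
    (hmono : Monotone φ) (t : ℝ) : φ t = φ 1 * t := by
  let H : ℝ →+ ℝ := AddMonoidHom.mk' φ hadd
  have hrat : ∀ q : ℚ, φ q = φ 1 * q := fun q => by
    have := map_rat_smul H q 1
    rw [Rat.smul_def, Rat.smul_def, mul_one] at this
    rw [mul_comm]
    exact this
  have hc : 0 ≤ φ 1 := H.map_zero ▸ hmono zero_le_one
  have hle : ∀ t, φ t ≤ φ 1 * t := fun t => by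
    refine le_of_forall_pos_lt_add fun ε hε => ?_
    have hδ : 0 < ε / (φ 1 + 1) := div_pos hε (by linarith)
    obtain ⟨q, htq, hqt⟩ := exists_rat_btwn (lt_add_of_pos_right t hδ)
    have hεδ : φ 1 * (ε / (φ 1 + 1)) < ε := by
      rw [mul_div_assoc', div_lt_iff₀ (by linarith)]
      nlinarith
    calc φ t ≤ φ q := hmono htq.le
      _ = φ 1 * q := hrat q
      _ ≤ φ 1 * (t + ε / (φ 1 + 1)) := mul_le_mul_of_nonneg_left hqt.le hc
      _ < φ 1 * t + ε := by linarith
  have hneg : φ (-t) = -φ t := H.map_neg t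
  linarith [hle t, hle (-t)]

theorem pexider {β A B : ℝ → ℝ} (hβ : Monotone β) (h : ∀ x y, β (x + y) = A x + B y)
    (x : ℝ) : A x = (β 1 - β 0) * x + A 0 := by
  have hx0 : ∀ x, β x = A x + B 0 := fun x => by simpa using h x 0
  have h0y : ∀ y, β y = A 0 + B y := fun y => by simpa using h 0 y
  have hlin := eq_mul_of_add_of_monotone (φ := fun t => β t - β 0)
    (fun x y => by linarith [h x y, hx0 x, h0y y, hx0 0]) (fun s t hst => by
      simpa using hβ hst) x
  linarith [hx0 x, h0y 0]

theorem eq_mul_add_of_comp_sum_eq {ι : Type*} [Fintype ι] [DecidableEq ι] {β : ℝ → ℝ}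
    (hβ : Monotone β) {G : ι → ℝ → ℝ} {ε : ι → ℝ}
    (h : ∀ u : ι → ℝ, β (∑ k, ε k * u k) = ∑ k, G k (u k)) {i j : ι} (hij : i ≠ j)
    (hi : ε i ≠ 0) (hj : ε j ≠ 0) (t : ℝ) : G i t = (β 1 - β 0) * ε i * t + G i 0 := by
  have key : ∀ x y, β (x + y) - β 0 = (G i (x / ε i) - G i 0) + (G j (y / ε j) - G j 0) := by
    intro x y
    set u : ι → ℝ := Pi.single i (x / ε i) + Pi.single j (y / ε j)
    have hsupp : ∀ k, k ≠ i ∧ k ≠ j → u k = 0 := fun k hk => by simp [u, hk.1, hk.2]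
    have hu : ∑ k, ε k * u k = x + y := by
      rw [Fintype.sum_eq_add i j hij fun k hk => by simp [hsupp k hk]]
      simp [u, hij, hij.symm, mul_div_cancel₀ _ hi, mul_div_cancel₀ _ hj]
    have h₀ := h 0
    simp only [Pi.zero_apply, mul_zero, sum_const_zero] at h₀
    rw [← hu, h u, h₀, ← sum_sub_distrib,
      Fintype.sum_eq_add i j hij fun k hk => by simp [hsupp k hk]]
    simp [u, hij, hij.symm]
  have := pexider (β := fun s => β s - β 0) (fun s t hst => by simpa using hβ hst) key (ε i * t)
  simp only [sub_self, sub_zero, zero_div, mul_div_cancel_left₀ _ hi] at this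
  linarith

end FunctionalEquation

namespace Minkowski

section Bilinear

variable {n : ℕ}

theorem minkG_comm (v w : Fin n → ℝ) : minkG v w = minkG w v := by
  simp only [minkG, mul_comm (v _)]

theorem minkG_add_left (u v w : Fin n → ℝ) : minkG (u + v) w = minkG u w + minkG v w := by
  simp only [minkG, ← sum_add_distrib, Pi.add_apply]
  refine sum_congr rfl fun i _ => ?_
  split_ifs <;> ring

theorem minkG_smul_left (c : ℝ) (v w : Fin n → ℝ) : minkG (c • v) w = c * minkG v w := by
  simp only [minkG, mul_sum, Pi.smul_apply, smul_eq_mul]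
  refine sum_congr rfl fun i _ => ?_
  split_ifs <;> ring

variable (n) in
noncomputable def minkForm : LinearMap.BilinForm ℝ (Fin n → ℝ) :=
  LinearMap.mk₂ ℝ minkG minkG_add_left minkG_smul_left
    (fun u v w => by rw [minkG_comm, minkG_add_left, minkG_comm v, minkG_comm w])
    (fun c v w => by rw [minkG_comm, minkG_smul_left, minkG_comm, smul_eq_mul])

@[simp]
theorem minkForm_apply (v w : Fin n → ℝ) : minkForm n v w = minkG v w := rfl

theorem minkG_add_right (u v w : Fin n → ℝ) : minkG u (v + w) = minkG u v + minkG u w :=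
  map_add (minkForm n u) v w

theorem minkG_smul_right (c : ℝ) (v w : Fin n → ℝ) : minkG v (c • w) = c * minkG v w :=
  map_smul (minkForm n v) c w

theorem minkG_neg_left (v w : Fin n → ℝ) : minkG (-v) w = -minkG v w :=
  LinearMap.map_neg₂ (minkForm n) v w

theorem minkG_neg_right (v w : Fin n → ℝ) : minkG v (-w) = -minkG v w :=
  map_neg (minkForm n v) w

theorem minkG_neg_neg (v w : Fin n → ℝ) : minkG (-v) (-w) = minkG v w := by
  rw [minkG_neg_left, minkG_neg_right, neg_neg]

theorem minkG_sub_left (u v w : Fin n → ℝ) : minkG (u - v) w = minkG u w - minkG v w :=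
  LinearMap.map_sub₂ (minkForm n) u v w

theorem minkG_sub_right (u v w : Fin n → ℝ) : minkG u (v - w) = minkG u v - minkG u w :=
  map_sub (minkForm n u) v w

theorem minkG_zero_right (v : Fin n → ℝ) : minkG v 0 = 0 :=
  map_zero (minkForm n v)

theorem minkG_sum_right {ι : Type*} (s : Finset ι) (v : Fin n → ℝ) (c : ι → ℝ)
    (w : ι → Fin n → ℝ) : minkG v (∑ i ∈ s, c i • w i) = ∑ i ∈ s, c i * minkG v (w i) := by
  simp [← minkForm_apply, map_sum]

theorem minkG_sub_smul_self (p a : Fin n → ℝ) (t : ℝ) :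
    minkG (p - t • a) (p - t • a) = minkG p p - 2 * t * minkG p a + t ^ 2 * minkG a a := by
  simp only [minkG_sub_left, minkG_sub_right, minkG_smul_left, minkG_smul_right, minkG_comm a p]
  ring

theorem minkG_single_right (v : Fin n → ℝ) (j : Fin n) (c : ℝ) :
    minkG v (Pi.single j c) = if (j : ℕ) = 0 then v j * c else -(v j * c) := by
  rw [minkG, sum_eq_single j (fun k _ hk => by simp [Pi.single_eq_of_ne hk]) (by simp)]
  simp

theorem eq_zero_of_forall_minkG_eq_zero {v : Fin n → ℝ} (h : ∀ w, minkG v w = 0) : v = 0 := by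
  funext j
  have := h (Pi.single j 1)
  rw [minkG_single_right] at this
  split_ifs at this <;> simpa using this

theorem exists_minkG_eq_of_minkG_ne_zero {b₁ b₂ : Fin n → ℝ} (h₁ : minkG b₁ b₁ = 0)
    (h₂ : minkG b₂ b₂ = 0) (h : minkG b₁ b₂ ≠ 0) (c₁ c₂ : ℝ) :
    ∃ w, minkG w b₁ = c₁ ∧ minkG w b₂ = c₂ := by
  refine ⟨(c₂ / minkG b₁ b₂) • b₁ + (c₁ / minkG b₁ b₂) • b₂, ?_, ?_⟩ <;>
    simp only [minkG_add_left, minkG_smul_left, h₁, h₂, minkG_comm b₂ b₁, mul_zero, zero_add,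
      add_zero] <;> field_simp

end Bilinear

section Spacetime

variable {n : ℕ}

noncomputable def spatial (v : Fin (n + 1) → ℝ) : EuclideanSpace ℝ (Fin n) :=
  WithLp.toLp 2 (Fin.tail v)

theorem minkG_eq_sub_inner (v w : Fin (n + 1) → ℝ) :
    minkG v w = v 0 * w 0 - inner ℝ (spatial v) (spatial w) := by
  simp [minkG, Fin.sum_univ_succ, spatial, PiLp.inner_apply, Fin.tail, mul_comm, sub_eq_add_neg]

theorem minkG_self_eq (v : Fin (n + 1) → ℝ) : minkG v v = v 0 ^ 2 - ‖spatial v‖ ^ 2 := by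
  rw [minkG_eq_sub_inner, real_inner_self_eq_norm_sq, sq (v 0)]

theorem minkG_self_nonpos_of_apply_zero {v : Fin (n + 1) → ℝ} (h : v 0 = 0) :
    minkG v v ≤ 0 := by
  rw [minkG_self_eq, h]
  nlinarith [norm_nonneg (spatial v)]

theorem eq_zero_of_minkG_self_eq_zero_of_apply_zero {v : Fin (n + 1) → ℝ}
    (hv : minkG v v = 0) (h : v 0 = 0) : v = 0 := by
  rw [minkG_self_eq, h] at hv
  have hs : spatial v = 0 := by simpa using hv
  funext i
  refine Fin.cases h (fun j => ?_) i
  simpa [spatial, Fin.tail] using congrFun (congrArg WithLp.ofLp hs) j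

end Spacetime

section Cones

variable {n : ℕ}

def FutureCausal (v : Fin (n + 1) → ℝ) : Prop := 0 ≤ minkG v v ∧ 0 ≤ v 0

def FutureNull (v : Fin (n + 1) → ℝ) : Prop := minkG v v = 0 ∧ 0 < v 0

def IsLightlike (v : Fin (n + 1) → ℝ) : Prop := minkG v v = 0 ∧ v ≠ 0

theorem _root_.FutureTimelike.norm_spatial_lt {v : Fin (n + 1) → ℝ} (hv : FutureTimelike v) :
    ‖spatial v‖ < v 0 := by
  have := hv.1
  rw [minkG_self_eq] at this
  nlinarith [hv.2, norm_nonneg (spatial v)]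

theorem FutureCausal.norm_spatial_le {v : Fin (n + 1) → ℝ} (hv : FutureCausal v) :
    ‖spatial v‖ ≤ v 0 := by
  have := hv.1
  rw [minkG_self_eq] at this
  nlinarith [hv.2, norm_nonneg (spatial v)]

theorem FutureCausal.apply_zero_pos {v : Fin (n + 1) → ℝ} (hv : FutureCausal v) (h : v ≠ 0) :
    0 < v 0 := by
  refine hv.2.lt_of_ne fun h0 => h (eq_zero_of_minkG_self_eq_zero_of_apply_zero ?_ h0.symm)
  exact le_antisymm (minkG_self_nonpos_of_apply_zero h0.symm) hv.1

/-- Reverse Cauchy–Schwarz: `v⁰w⁰ > ‖v⃗‖‖w⃗‖ ≥ ⟪v⃗, w⃗⟫`. -/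
theorem _root_.FutureTimelike.minkG_pos {v w : Fin (n + 1) → ℝ} (hv : FutureTimelike v)
    (hw : FutureCausal w) (hw0 : w ≠ 0) : 0 < minkG v w := by
  have hcs := real_inner_le_norm (spatial v) (spatial w)
  have hv' := hv.norm_spatial_lt
  have hw' := hw.norm_spatial_le
  have hw0' := hw.apply_zero_pos hw0
  rw [minkG_eq_sub_inner]
  nlinarith [norm_nonneg (spatial v), norm_nonneg (spatial w)]

theorem _root_.FutureTimelike.add {v w : Fin (n + 1) → ℝ} (hv : FutureTimelike v)
    (hw : FutureCausal w) : FutureTimelike (v + w) := by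
  obtain rfl | hw0 := eq_or_ne w 0
  · simpa
  have := hv.minkG_pos hw hw0
  refine ⟨?_, by simpa using add_pos_of_pos_of_nonneg hv.2 hw.2⟩
  rw [minkG_add_left, minkG_add_right, minkG_add_right, minkG_comm w v]
  linarith [hv.1, hw.1]

theorem _root_.FutureTimelike.smul {v : Fin (n + 1) → ℝ} (hv : FutureTimelike v) {c : ℝ}
    (hc : 0 < c) : FutureTimelike (c • v) := by
  refine ⟨?_, by simpa using mul_pos hc hv.2⟩
  rw [minkG_smul_left, minkG_smul_right]
  exact mul_pos hc (mul_pos hc hv.1)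

theorem futureTimelike_single_zero {c : ℝ} (hc : 0 < c) :
    FutureTimelike (Pi.single 0 c : Fin (n + 1) → ℝ) :=
  ⟨by rw [minkG_single_right]; simpa using mul_pos hc hc, by simpa⟩

theorem futureNull_single_zero_add_single {J : Fin (n + 1)} (hJ : J ≠ 0) :
    FutureNull (Pi.single 0 1 + Pi.single J 1 : Fin (n + 1) → ℝ) := by
  refine ⟨?_, by simp [hJ.symm]⟩
  rw [minkG_add_left, minkG_add_right, minkG_add_right, minkG_single_right,
    minkG_single_right, minkG_single_right, minkG_single_right]
  simp [hJ, hJ.symm, Fin.val_eq_zero_iff]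

theorem IsLightlike.apply_zero_ne_zero {v : Fin (n + 1) → ℝ} (hv : IsLightlike v) : v 0 ≠ 0 :=
  fun h => hv.2 (eq_zero_of_minkG_self_eq_zero_of_apply_zero hv.1 h)

theorem IsLightlike.exists_apply_zero_sub_smul {a w : Fin (n + 1) → ℝ} (ha : IsLightlike a)
    (h : minkG w a = 0) :
    ∃ t : ℝ, (w - t • a) 0 = 0 ∧ minkG (w - t • a) (w - t • a) = minkG w w := by
  refine ⟨w 0 / a 0, ?_, ?_⟩
  · simp [div_mul_cancel₀ _ ha.apply_zero_ne_zero]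
  · rw [minkG_sub_smul_self, h, ha.1]
    ring

theorem IsLightlike.minkG_self_nonpos {a w : Fin (n + 1) → ℝ} (ha : IsLightlike a)
    (h : minkG w a = 0) : minkG w w ≤ 0 := by
  obtain ⟨t, h0, hq⟩ := ha.exists_apply_zero_sub_smul h
  exact hq ▸ minkG_self_nonpos_of_apply_zero h0

theorem IsLightlike.eq_smul {a b : Fin (n + 1) → ℝ} (ha : IsLightlike a)
    (hb : minkG b b = 0) (h : minkG b a = 0) : ∃ t : ℝ, b = t • a := by
  obtain ⟨t, h0, hq⟩ := ha.exists_apply_zero_sub_smul h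
  exact ⟨t, sub_eq_zero.mp (eq_zero_of_minkG_self_eq_zero_of_apply_zero (hq.trans hb) h0)⟩

theorem futureNull_iff {v : Fin (n + 1) → ℝ} :
    FutureNull v ↔ FutureCausal v ∧ ¬FutureTimelike v ∧ v ≠ 0 := by
  constructor
  · rintro ⟨hq, h0⟩
    refine ⟨⟨hq.ge, h0.le⟩, fun h => h.1.ne' hq, ?_⟩
    rintro rfl
    simp at h0
  · rintro ⟨hc, hnt, hv⟩
    have h0 := hc.apply_zero_pos hv
    exact ⟨le_antisymm (not_lt.mp fun hq => hnt ⟨hq, h0⟩) hc.1, h0⟩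

theorem minkG_self_pos_iff {v : Fin (n + 1) → ℝ} :
    0 < minkG v v ↔ FutureTimelike v ∨ FutureTimelike (-v) := by
  refine ⟨fun hq => ?_, ?_⟩
  · have h0 : v 0 ≠ 0 := fun h0 => (minkG_self_nonpos_of_apply_zero h0).not_gt hq
    rcases h0.lt_or_gt with h0 | h0
    · exact Or.inr ⟨by rwa [minkG_neg_neg], by simpa⟩
    · exact Or.inl ⟨hq, h0⟩
  · rintro (h | h)
    · exact h.1
    · simpa [minkG_neg_neg] using h.1

theorem minkG_self_eq_zero_iff {v : Fin (n + 1) → ℝ} :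
    minkG v v = 0 ↔ v = 0 ∨ FutureNull v ∨ FutureNull (-v) := by
  refine ⟨fun hq => ?_, ?_⟩
  · obtain rfl | hv := eq_or_ne v 0
    · exact Or.inl rfl
    rcases IsLightlike.apply_zero_ne_zero ⟨hq, hv⟩ |>.lt_or_gt with h0 | h0
    · exact Or.inr (Or.inr ⟨by rwa [minkG_neg_neg], by simpa⟩)
    · exact Or.inr (Or.inl ⟨hq, h0⟩)
  · rintro (rfl | h | h)
    · exact minkG_zero_right 0
    · exact h.1
    · simpa [minkG_neg_neg] using h.1

theorem FutureNull.isLightlike {v : Fin (n + 1) → ℝ} (hv : FutureNull v) : IsLightlike v :=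
  ⟨hv.1, (futureNull_iff.1 hv).2.2⟩

end Cones

section Chronology

open Filter Topology

variable {n : ℕ}

def IsChronoIso (F : (Fin (n + 1) → ℝ) ≃ (Fin (n + 1) → ℝ)) : Prop :=
  ∀ p q, FutureTimelike (F p - F q) ↔ FutureTimelike (p - q)

theorem isClosed_setOf_futureCausal : IsClosed {v : Fin (n + 1) → ℝ | FutureCausal v} := by
  have hq : Continuous fun v : Fin (n + 1) → ℝ => minkG v v :=
    continuous_finsetSum _ fun i _ => by split_ifs <;> fun_prop
  exact (isClosed_le continuous_const hq).inter (isClosed_le continuous_const (continuous_apply 0))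

/-- For `⇐`: `y - x + ε e₀` is future timelike for every `ε > 0`, and the future causal cone is
closed. -/
theorem futureCausal_sub_iff_forall {x y : Fin (n + 1) → ℝ} :
    FutureCausal (y - x) ↔ ∀ z, FutureTimelike (z - y) → FutureTimelike (z - x) := by
  refine ⟨fun h z hz => by simpa using hz.add h, fun h => ?_⟩
  have hft : ∀ ε > 0, FutureTimelike (y - x + Pi.single 0 ε) := fun ε hε => by
    have := h (y + Pi.single 0 ε) (by simpa using futureTimelike_single_zero hε)
    rwa [add_sub_right_comm] at this
  have hlim : Tendsto (fun ε : ℝ => y - x + Pi.single 0 ε) (𝓝[>] 0) (𝓝 (y - x)) := by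
    have hc : Continuous fun ε : ℝ => y - x + Pi.single 0 ε :=
      continuous_const.add (continuous_single (A := fun _ : Fin (n + 1) => ℝ) 0)
    simpa using (hc.tendsto 0).mono_left nhdsWithin_le_nhds
  refine isClosed_setOf_futureCausal.mem_of_tendsto hlim ?_
  filter_upwards [self_mem_nhdsWithin] with ε hε
  exact ⟨(hft ε hε).1.le, (hft ε hε).2.le⟩

namespace IsChronoIso

variable {F : (Fin (n + 1) → ℝ) ≃ (Fin (n + 1) → ℝ)}

theorem futureCausal_sub_iff (hF : IsChronoIso F) (x y : Fin (n + 1) → ℝ) :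
    FutureCausal (F y - F x) ↔ FutureCausal (y - x) := by
  rw [futureCausal_sub_iff_forall, futureCausal_sub_iff_forall, ← F.forall_congr_right]
  exact forall_congr' fun z => imp_congr (hF z y) (hF z x)

theorem futureNull_sub_iff (hF : IsChronoIso F) (x y : Fin (n + 1) → ℝ) :
    FutureNull (F y - F x) ↔ FutureNull (y - x) := by
  simp only [futureNull_iff, hF.futureCausal_sub_iff, hF y x, ne_eq, sub_eq_zero,
    F.apply_eq_iff_eq]

theorem minkG_self_sub_pos_iff (hF : IsChronoIso F) (x y : Fin (n + 1) → ℝ) :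
    0 < minkG (F y - F x) (F y - F x) ↔ 0 < minkG (y - x) (y - x) := by
  rw [minkG_self_pos_iff, minkG_self_pos_iff, neg_sub, neg_sub, hF, hF]

theorem minkG_self_sub_eq_zero_iff (hF : IsChronoIso F) (x y : Fin (n + 1) → ℝ) :
    minkG (F y - F x) (F y - F x) = 0 ↔ minkG (y - x) (y - x) = 0 := by
  simp only [minkG_self_eq_zero_iff, neg_sub, hF.futureNull_sub_iff, sub_eq_zero,
    F.apply_eq_iff_eq]

theorem isLightlike_sub_iff (hF : IsChronoIso F) (x y : Fin (n + 1) → ℝ) :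
    IsLightlike (F y - F x) ↔ IsLightlike (y - x) := by
  simp only [IsLightlike, hF.minkG_self_sub_eq_zero_iff, ne_eq, sub_eq_zero, F.apply_eq_iff_eq]

end IsChronoIso

end Chronology

section NullHyperplane

variable {n : ℕ} {a : Fin (n + 1) → ℝ}

theorem IsLightlike.eq_add_smul {x u : Fin (n + 1) → ℝ} (ha : IsLightlike a)
    (hx : minkG (u - x) (u - x) = 0) (hxa : minkG (u - (x + a)) (u - (x + a)) = 0) :
    ∃ t : ℝ, u = x + t • a := by
  have hxa' := minkG_sub_smul_self (u - x) a 1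
  rw [one_smul, sub_sub, hxa, hx, ha.1] at hxa'
  obtain ⟨t, ht⟩ := ha.eq_smul hx (by linarith)
  exact ⟨t, by rw [← ht, add_sub_cancel]⟩

/-- The points null-separated from both `x` and `x + a` are those of the null line `x + ℝ a`. -/
theorem IsLightlike.minkG_sub_eq_zero_iff (ha : IsLightlike a) {x z : Fin (n + 1) → ℝ} :
    minkG (z - x) a = 0 ↔ ∀ u, minkG (u - x) (u - x) = 0 →
      minkG (u - (x + a)) (u - (x + a)) = 0 → ¬0 < minkG (z - u) (z - u) := by
  constructor
  · intro h u hx hxa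
    obtain ⟨t, rfl⟩ := ha.eq_add_smul hx hxa
    rw [← sub_sub, minkG_sub_smul_self, h, ha.1]
    simpa using ha.minkG_self_nonpos h
  · contrapose!
    intro hc
    set t := (minkG (z - x) (z - x) - 1) / (2 * minkG (z - x) a)
    refine ⟨x + t • a, ?_, ?_, ?_⟩
    · simp [minkG_smul_left, minkG_smul_right, ha.1]
    · rw [← sub_sub, add_sub_cancel_left, show t • a - a = (t - 1) • a by rw [sub_smul, one_smul],
        minkG_smul_left, minkG_smul_right, ha.1, mul_zero, mul_zero]
    · have ht : 2 * t * minkG (z - x) a = minkG (z - x) (z - x) - 1 := by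
        simp only [t]
        field_simp
      rw [← sub_sub, minkG_sub_smul_self, ha.1, ht]
      norm_num

theorem IsChronoIso.minkG_sub_map_eq_zero_iff {F : (Fin (n + 1) → ℝ) ≃ (Fin (n + 1) → ℝ)}
    (hF : IsChronoIso F) (ha : IsLightlike a) (x z : Fin (n + 1) → ℝ) :
    minkG (F z - F x) (F (x + a) - F x) = 0 ↔ minkG (z - x) a = 0 := by
  have ha' : IsLightlike (F (x + a) - F x) := by
    rw [hF.isLightlike_sub_iff, add_sub_cancel_left]
    exact ha
  rw [ha'.minkG_sub_eq_zero_iff, ha.minkG_sub_eq_zero_iff, ← F.forall_congr_right,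
    add_sub_cancel]
  exact forall_congr' fun u => by
    rw [hF.minkG_self_sub_eq_zero_iff, hF.minkG_self_sub_eq_zero_iff, hF.minkG_self_sub_pos_iff]

end NullHyperplane

section LevelFunction

variable {n : ℕ} {a : Fin (n + 1) → ℝ} {F : (Fin (n + 1) → ℝ) ≃ (Fin (n + 1) → ℝ)}

/-- Two null hyperplanes orthogonal to non-orthogonal null directions meet; pulling a common
point back by `F` shows that the hyperplanes orthogonal to `a` through `x₁` and `x₂` would then
coincide. -/
theorem IsChronoIso.exists_map_add_sub_eq_smul (hF : IsChronoIso F) (ha : IsLightlike a)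
    (x₁ x₂ : Fin (n + 1) → ℝ) : ∃ t : ℝ, F (x₂ + a) - F x₂ = t • (F (x₁ + a) - F x₁) := by
  have hlight : ∀ x, IsLightlike (F (x + a) - F x) := fun x => by
    rw [hF.isLightlike_sub_iff, add_sub_cancel_left]
    exact ha
  refine (hlight x₁).eq_smul (hlight x₂).1 ?_
  by_cases hx : minkG (x₂ - x₁) a = 0
  · have h₁ := (hF.minkG_sub_map_eq_zero_iff ha x₁ x₂).2 hx
    have h₂ := (hF.minkG_sub_map_eq_zero_iff ha x₁ (x₂ + a)).2 (by
      rw [add_sub_right_comm, minkG_add_left, hx, ha.1, add_zero])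
    rw [← sub_sub_sub_cancel_right (F (x₂ + a)) (F x₂) (F x₁), minkG_sub_left, h₁, h₂, sub_zero]
  · by_contra h
    obtain ⟨w, hw₁, hw₂⟩ := exists_minkG_eq_of_minkG_ne_zero (hlight x₁).1 (hlight x₂).1
      (by rwa [minkG_comm]) (minkG (F x₁) (F (x₁ + a) - F x₁)) (minkG (F x₂) (F (x₂ + a) - F x₂))
    obtain ⟨v, rfl⟩ := F.surjective w
    have h₁ := (hF.minkG_sub_map_eq_zero_iff ha x₁ v).1 (by rw [minkG_sub_left, hw₁, sub_self])
    have h₂ := (hF.minkG_sub_map_eq_zero_iff ha x₂ v).1 (by rw [minkG_sub_left, hw₂, sub_self])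
    exact hx (by rw [← sub_sub_sub_cancel_left x₁ x₂ v, minkG_sub_left, h₁, h₂, sub_zero])

theorem IsChronoIso.minkG_map_eq_of_minkG_eq (hF : IsChronoIso F) (ha : IsLightlike a)
    {z z' : Fin (n + 1) → ℝ} (h : minkG z a = minkG z' a) :
    minkG (F z) (F a - F 0) = minkG (F z') (F a - F 0) := by
  have h₀ := (hF.minkG_sub_map_eq_zero_iff ha z' z).2 (by rw [minkG_sub_left, h, sub_self])
  obtain ⟨t, ht⟩ := hF.exists_map_add_sub_eq_smul ha 0 z'
  have ht₀ : t ≠ 0 := by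
    rintro rfl
    refine ((hF.isLightlike_sub_iff z' (z' + a)).2 ?_).2 (by rw [ht, zero_smul])
    rwa [add_sub_cancel_left]
  rw [ht, zero_add, minkG_smul_right] at h₀
  rw [← sub_eq_zero, ← minkG_sub_left]
  exact (mul_eq_zero.1 h₀).resolve_left ht₀

theorem IsChronoIso.exists_strictMono (hF : IsChronoIso F) (ha : FutureNull a) :
    ∃ φ : ℝ → ℝ, StrictMono φ ∧ ∀ z, minkG (F z) (F a - F 0) = φ (minkG z a) := by
  set p : Fin (n + 1) → ℝ := Pi.single 0 (a 0)⁻¹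
  have hp : FutureTimelike p := futureTimelike_single_zero (inv_pos.2 ha.2)
  have hpa : ∀ c : ℝ, minkG (c • p) a = c := fun c => by
    rw [minkG_smul_left, minkG_comm, minkG_single_right]
    simp [ha.2.ne']
  have ha' : FutureNull (F a - F 0) := by
    rw [hF.futureNull_sub_iff, sub_zero]
    exact ha
  refine ⟨fun c => minkG (F (c • p)) (F a - F 0), fun c c' hcc => ?_,
    fun z => hF.minkG_map_eq_of_minkG_eq ha.isLightlike (hpa _).symm⟩
  have hft : FutureTimelike (F (c' • p) - F (c • p)) := by
    rw [hF, ← sub_smul]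
    exact hp.smul (sub_pos.2 hcc)
  have := hft.minkG_pos (futureNull_iff.1 ha').1 ha'.isLightlike.2
  rwa [minkG_sub_left, sub_pos] at this

end LevelFunction

section Levels

open Function Submodule

variable {n : ℕ} {ι : Type*}

noncomputable def levels (f : ι → Fin n → ℝ) : (Fin n → ℝ) →ₗ[ℝ] ι → ℝ :=
  LinearMap.pi fun i => (minkForm n).flip (f i)

@[simp]
theorem levels_apply (f : ι → Fin n → ℝ) (z : Fin n → ℝ) (i : ι) :
    levels f z i = minkG z (f i) := rfl

theorem levels_injective {f : ι → Fin n → ℝ} (hf : span ℝ (Set.range f) = ⊤) :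
    Injective (levels f) := by
  rw [← LinearMap.ker_eq_bot, eq_bot_iff]
  intro z hz
  have : minkForm n z = 0 := LinearMap.ext_on_range hf fun i => congrFun hz i
  exact eq_zero_of_forall_minkG_eq_zero fun w => LinearMap.congr_fun this w

theorem linearIndependent_of_forall_exists_levels_eq [Fintype ι] [DecidableEq ι]
    {f : ι → Fin n → ℝ} {φ : ι → ℝ → ℝ} (hφ : ∀ i, Injective (φ i))
    (h : ∀ u : ι → ℝ, ∃ y, ∀ i, minkG y (f i) = φ i (u i)) : LinearIndependent ℝ f := by
  rw [Fintype.linearIndependent_iff]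
  intro d hd i
  have hsum : ∀ u : ι → ℝ, ∑ k, d k * φ k (u k) = 0 := fun u => by
    obtain ⟨y, hy⟩ := h u
    simp only [← hy, ← minkG_sum_right, hd, minkG_zero_right]
  have := sub_eq_zero.2 ((hsum (Pi.single i 1)).trans (hsum 0).symm)
  rw [← Finset.sum_sub_distrib, Finset.sum_eq_single i (fun k _ hk => by simp [hk]) (by simp),
    ← mul_sub] at this
  simp only [Pi.single_eq_same, Pi.zero_apply] at this
  exact (mul_eq_zero.1 this).resolve_right fun h => one_ne_zero (hφ i (sub_eq_zero.1 h))

theorem exists_linearMap_of_levels_eq_add {f : Fin n → Fin n → ℝ}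
    (hf : span ℝ (Set.range f) = ⊤) {G : (Fin n → ℝ) → Fin n → ℝ}
    (A : (Fin n → ℝ) →ₗ[ℝ] Fin n → ℝ) (r : Fin n → ℝ) (h : ∀ z, levels f (G z) = A z + r) :
    ∃ L : (Fin n → ℝ) →ₗ[ℝ] Fin n → ℝ, ∀ z, G z = L z + G 0 := by
  let T := LinearEquiv.ofInjectiveEndo (levels f) (levels_injective hf)
  have hG : ∀ z, G z = T.symm (A z) + T.symm r := fun z => by
    rw [← map_add, ← h z, T.eq_symm_apply]
    rfl
  exact ⟨T.symm.toLinearMap ∘ₗ A, fun z => by simp [hG z, hG 0]⟩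

end Levels

section NullFrame

variable {m : ℕ}

noncomputable def nullFrame (i : Fin (m + 3)) : Fin (m + 3) → ℝ :=
  if i = 0 then Pi.single 0 1 + Pi.single 1 1 else Pi.single 0 1 - Pi.single i 1

theorem minkG_nullFrame (z : Fin (m + 3) → ℝ) (i : Fin (m + 3)) :
    minkG z (nullFrame i) = if i = 0 then z 0 - z 1 else z 0 + z i := by
  unfold nullFrame
  split_ifs with hi
  · rw [minkG_add_right, minkG_single_right, minkG_single_right]
    simp [sub_eq_add_neg]
  · rw [minkG_sub_right, minkG_single_right, minkG_single_right]
    simp [Fin.val_eq_zero_iff, hi]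

theorem futureNull_nullFrame (i : Fin (m + 3)) : FutureNull (nullFrame i) := by
  rw [FutureNull, minkG_nullFrame]
  by_cases hi : i = 0 <;> simp [nullFrame, hi]

theorem levels_nullFrame_surjective : Function.Surjective (levels (nullFrame (m := m))) := by
  refine LinearMap.injective_iff_surjective.1 ((injective_iff_map_eq_zero _).2 fun z hz => ?_)
  have hz : ∀ i, minkG z (nullFrame i) = 0 := congrFun hz
  have h0 := hz 0
  have h1 := hz 1
  simp only [minkG_nullFrame, if_true, if_neg (show (1 : Fin (m + 3)) ≠ 0 by simp)] at h0 h1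
  funext i
  by_cases hi : i = 0
  · subst hi
    rw [Pi.zero_apply]
    linarith
  · have := hz i
    rw [minkG_nullFrame, if_neg hi] at this
    rw [Pi.zero_apply]
    linarith

theorem minkG_single_zero_add_single {J : Fin (m + 3)} (hJ : J ≠ 0) (z : Fin (m + 3) → ℝ) :
    minkG z (Pi.single 0 1 + Pi.single J 1) = ∑ k, (Pi.single 0 1 + Pi.single 1 1 -
      Pi.single J 1 : Fin (m + 3) → ℝ) k * minkG z (nullFrame k) := by
  have hw : Pi.single 0 1 + Pi.single J 1 = nullFrame 0 + nullFrame 1 - nullFrame J := by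
    simp only [nullFrame, if_true, if_neg (show (1 : Fin (m + 3)) ≠ 0 by simp), if_neg hJ]
    abel
  rw [hw, minkG_sub_right, minkG_add_right]
  simp [add_mul, sub_mul, Finset.sum_add_distrib, Finset.sum_sub_distrib, Pi.single_apply]

end NullFrame

section Affine

open Submodule

variable {m : ℕ} {F : (Fin (m + 3) → ℝ) ≃ (Fin (m + 3) → ℝ)} {φ : Fin (m + 3) → ℝ → ℝ}

theorem IsChronoIso.exists_affine_level_of_ne (hF : IsChronoIso F)
    (hφ : ∀ i z, minkG (F z) (F (nullFrame i) - F 0) = φ i (minkG z (nullFrame i)))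
    (hspan : span ℝ (Set.range fun i => F (nullFrame i) - F 0) = ⊤) {J : Fin (m + 3)}
    (hJ : J ≠ 0) {i j : Fin (m + 3)} (hij : i ≠ j)
    (hi : (Pi.single 0 1 + Pi.single 1 1 - Pi.single J 1 : Fin (m + 3) → ℝ) i ≠ 0)
    (hj : (Pi.single 0 1 + Pi.single 1 1 - Pi.single J 1 : Fin (m + 3) → ℝ) j ≠ 0) :
    ∃ s, ∀ t, φ i t = s * t + φ i 0 := by
  set ε : Fin (m + 3) → ℝ := Pi.single 0 1 + Pi.single 1 1 - Pi.single J 1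
  set w : Fin (m + 3) → ℝ := Pi.single 0 1 + Pi.single J 1
  obtain ⟨β, hβ, hFβ⟩ := hF.exists_strictMono (futureNull_single_zero_add_single hJ)
  obtain ⟨c, hc⟩ := (mem_span_range_iff_exists_fun ℝ).1 (hspan ▸ mem_top : F w - F 0 ∈ _)
  have key : ∀ u : Fin (m + 3) → ℝ, β (∑ k, ε k * u k) = ∑ k, c k * φ k (u k) := fun u => by
    obtain ⟨z, rfl⟩ := levels_nullFrame_surjective u
    simp only [levels_apply]
    rw [← minkG_single_zero_add_single hJ, ← hFβ, ← hc, minkG_sum_right]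
    simp only [hφ]
  have hlin := eq_mul_add_of_comp_sum_eq (G := fun k t => c k * φ k t) hβ.monotone key hij hi hj
  have hσ : 0 < β 1 - β 0 := sub_pos.2 (hβ zero_lt_one)
  have hci : c i ≠ 0 := fun h => by simpa [h, hσ.ne', hi] using hlin 1
  exact ⟨(β 1 - β 0) * ε i / c i, fun t => by field_simp; linarith [hlin t]⟩

theorem IsChronoIso.exists_affine_level (hF : IsChronoIso F)
    (hφ : ∀ i z, minkG (F z) (F (nullFrame i) - F 0) = φ i (minkG z (nullFrame i)))
    (hspan : span ℝ (Set.range fun i => F (nullFrame i) - F 0) = ⊤) (i : Fin (m + 3)) :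
    ∃ s, ∀ t, φ i t = s * t + φ i 0 := by
  have h10 : (1 : Fin (m + 3)) ≠ 0 := by simp
  have h20 : (2 : Fin (m + 3)) ≠ 0 := by simp [Fin.ext_iff, Nat.mod_eq_of_lt]
  have h21 : (2 : Fin (m + 3)) ≠ 1 := by simp [Fin.ext_iff, Nat.mod_eq_of_lt]
  by_cases h0 : i = 0
  · subst h0
    exact hF.exists_affine_level_of_ne hφ hspan h20 h10.symm (by simp [h20.symm])
      (by simp [h10, h21.symm])
  by_cases h1 : i = 1
  · subst h1
    exact hF.exists_affine_level_of_ne hφ hspan h20 h10 (by simp [h10, h21.symm])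
      (by simp [h20.symm])
  · exact hF.exists_affine_level_of_ne hφ hspan h0 h0 (by simp [Ne.symm h0, Ne.symm h1])
      (by simp [Ne.symm h0])

theorem IsChronoIso.exists_linearMap (hF : IsChronoIso F) :
    ∃ L : (Fin (m + 3) → ℝ) →ₗ[ℝ] Fin (m + 3) → ℝ, ∀ z, F z = L z + F 0 := by
  choose φ hφ hFφ using fun i => hF.exists_strictMono (futureNull_nullFrame i)
  have hspan : span ℝ (Set.range fun i => F (nullFrame i) - F 0) = ⊤ := by
    refine (linearIndependent_of_forall_exists_levels_eq (fun i => (hφ i).injective)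
      fun u => ?_).span_eq_top_of_card_eq_finrank (by simp)
    obtain ⟨z, rfl⟩ := levels_nullFrame_surjective u
    exact ⟨F z, fun i => hFφ i z⟩
  choose s hs using hF.exists_affine_level hFφ hspan
  refine exists_linearMap_of_levels_eq_add hspan (levels fun i => s i • nullFrame i)
    (fun i => φ i 0) fun z => funext fun i => ?_
  rw [Pi.add_apply, levels_apply, levels_apply, hFφ, hs, minkG_smul_right]

end Affine

section Conformal

variable {n : ℕ}

theorem minkG_single_single (k l : Fin (n + 1)) :
    minkG (Pi.single k 1) (Pi.single l 1) = if k = l then (if k = 0 then 1 else -1) else 0 := by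
  rw [minkG_single_right]
  by_cases hkl : k = l
  · subst hkl
    simp [Fin.val_eq_zero_iff]
  · simp [hkl]

variable {B : LinearMap.BilinForm ℝ (Fin (n + 1) → ℝ)}

theorem apply_single_zero_single_of_null (hB : B.IsSymm) (h : ∀ v, minkG v v = 0 → B v v = 0)
    {k : Fin (n + 1)} (hk : k ≠ 0) :
    B (Pi.single 0 1) (Pi.single k 1) = 0 ∧
      B (Pi.single k 1) (Pi.single k 1) = -B (Pi.single 0 1) (Pi.single 0 1) := by
  have hnull : ∀ s : ℝ, s ^ 2 = 1 → minkG (Pi.single 0 1 + s • Pi.single k 1)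
      (Pi.single 0 1 + s • Pi.single k 1) = 0 := fun s hs => by
    simp only [minkG_add_left, minkG_add_right, minkG_smul_left, minkG_smul_right,
      minkG_single_single, hk, hk.symm, if_true, if_false]
    linear_combination (-1 : ℝ) * hs
  have hpos := h _ (hnull 1 (one_pow 2))
  have hneg := h _ (hnull (-1) (by norm_num))
  simp only [map_add, map_smul, LinearMap.add_apply, LinearMap.smul_apply, smul_eq_mul,
    hB.eq (Pi.single k 1) (Pi.single 0 1)] at hpos hneg
  constructor <;> linarith

theorem apply_single_single_of_null (hB : B.IsSymm) (h : ∀ v, minkG v v = 0 → B v v = 0)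
    {k l : Fin (n + 1)} (hk : k ≠ 0) (hl : l ≠ 0) (hkl : k ≠ l) :
    B (Pi.single k 1) (Pi.single l 1) = 0 := by
  -- null because `5² = 3² + 4²`
  have hnull := h ((5 : ℝ) • Pi.single 0 1 + (3 : ℝ) • Pi.single k 1 + (4 : ℝ) • Pi.single l 1) (by
    simp only [minkG_add_left, minkG_add_right, minkG_smul_left, minkG_smul_right,
      minkG_single_single, hk, hk.symm, hl, hl.symm, hkl, hkl.symm, if_true, if_false]
    norm_num)
  obtain ⟨hk0, hkk⟩ := apply_single_zero_single_of_null hB h hk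
  obtain ⟨hl0, hll⟩ := apply_single_zero_single_of_null hB h hl
  simp only [map_add, map_smul, LinearMap.add_apply, LinearMap.smul_apply, smul_eq_mul,
    hB.eq (Pi.single k 1) (Pi.single 0 1), hB.eq (Pi.single l 1) (Pi.single 0 1),
    hB.eq (Pi.single l 1) (Pi.single k 1), hk0, hl0, hkk, hll] at hnull
  linarith

theorem eq_smul_minkForm_of_isSymm (hB : B.IsSymm) (h : ∀ v, minkG v v = 0 → B v v = 0) :
    B = B (Pi.single 0 1) (Pi.single 0 1) • minkForm (n + 1) := by
  refine LinearMap.BilinForm.ext_basis (Pi.basisFun ℝ (Fin (n + 1))) fun k l => ?_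
  simp only [Pi.basisFun_apply, LinearMap.smul_apply, minkForm_apply, minkG_single_single,
    smul_eq_mul]
  obtain rfl | hk := eq_or_ne k 0 <;> obtain rfl | hl := eq_or_ne l 0
  · simp
  · simp [(apply_single_zero_single_of_null hB h hl).1, hl.symm]
  · simp [hB.eq (Pi.single k 1), (apply_single_zero_single_of_null hB h hk).1, hk]
  obtain rfl | hkl := eq_or_ne k l
  · simp [(apply_single_zero_single_of_null hB h hk).2, hk]
  · simp [apply_single_single_of_null hB h hk hl hkl, hkl]

theorem exists_eq_smul_lorentz {L : (Fin (n + 1) → ℝ) →ₗ[ℝ] Fin (n + 1) → ℝ}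
    (ht : ∀ v, FutureTimelike v → FutureTimelike (L v))
    (hnull : ∀ v, minkG v v = 0 → minkG (L v) (L v) = 0) :
    ∃ lam : ℝ, 0 < lam ∧ ∃ Λ : (Fin (n + 1) → ℝ) →ₗ[ℝ] Fin (n + 1) → ℝ,
      (∀ v w, minkG (Λ v) (Λ w) = minkG v w) ∧ (∀ v, FutureTimelike v → FutureTimelike (Λ v)) ∧
      L = lam • Λ := by
  have hconf := eq_smul_minkForm_of_isSymm (B := (minkForm _).compl₁₂ L L)
    ⟨fun v w => minkG_comm _ _⟩ hnull
  set μ := minkG (L (Pi.single 0 1)) (L (Pi.single 0 1))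
  have hμ₀ : 0 < μ := (ht _ (futureTimelike_single_zero one_pos)).1
  have hμ : 0 < √μ := Real.sqrt_pos.2 hμ₀
  refine ⟨√μ, hμ, (√μ)⁻¹ • L, fun v w => ?_, fun v hv => (ht v hv).smul (inv_pos.2 hμ),
    by rw [smul_smul, mul_inv_cancel₀ hμ.ne', one_smul]⟩
  have hvw := LinearMap.congr_fun₂ hconf v w
  simp only [LinearMap.compl₁₂_apply, LinearMap.smul_apply, minkForm_apply, smul_eq_mul] at hvw
  rw [LinearMap.smul_apply, LinearMap.smul_apply, minkG_smul_left, minkG_smul_right, hvw,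
    ← mul_assoc, ← mul_assoc, ← mul_inv, Real.mul_self_sqrt hμ₀.le, inv_mul_cancel₀ hμ₀.ne',
    one_mul]

end Conformal

end Minkowski

open Minkowski

/-- **Alexandrov–Zeeman.** For `n ≥ 3`, a bijection of Minkowski space `ℝⁿ`
which together with its inverse preserves the chronological order `p > q`
(`p - q` timelike and future pointing) is the composition of an orthochronous Poincaré
transformation with a dilation. -/
theorem alexandrov_zeeman (m : ℕ)
    (F : (Fin (m + 3) → ℝ) ≃ (Fin (m + 3) → ℝ))
    (hF : ∀ p q, FutureTimelike (p - q) → FutureTimelike (F p - F q))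
    (hFinv : ∀ p q, FutureTimelike (p - q) → FutureTimelike (F.symm p - F.symm q)) :
    ∃ (lam : ℝ) (mm : Fin (m + 3) → ℝ)
      (Λ : (Fin (m + 3) → ℝ) →ₗ[ℝ] (Fin (m + 3) → ℝ)),
      0 < lam ∧
      (∀ v w, minkG (Λ v) (Λ w) = minkG v w) ∧
      (∀ v, FutureTimelike v → FutureTimelike (Λ v)) ∧
      ∀ p, F p = lam • Λ p + mm := by
  have hchrono : IsChronoIso F := fun p q =>
    ⟨fun h => by simpa using hFinv (F p) (F q) h, hF p q⟩
  obtain ⟨L, hL⟩ := hchrono.exists_linearMap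
  have hLF : ∀ v, L v = F v - F 0 := fun v => by rw [hL v, add_sub_cancel_right]
  obtain ⟨lam, hlam, Λ, hΛ, hΛt, rfl⟩ := exists_eq_smul_lorentz
    (fun v hv => by rw [hLF]; exact hF v 0 (by rwa [sub_zero]))
    (fun v hv => by rw [hLF]; exact (hchrono.minkG_self_sub_eq_zero_iff 0 v).2 (by rwa [sub_zero]))
  exact ⟨lam, F 0, Λ, hlam, hΛ, hΛt, hL⟩
end

section
/- (Alexandrov) Let n ≥ 3. Let F : ℝⁿ → ℝⁿ be a bijection such that for all p, q ∈ ℝⁿ: g(p − q, p − q) = 0 implies g(F(p) − F(q), F(p) − F(q)) = 0 and g(F⁻¹(p) − F⁻¹(q), F⁻¹(p) − F⁻¹(q)) = 0. Then F is the composition of a Poincaré transformation with a dilation: there exist λ > 0, a vector m ∈ ℝⁿ, and a linear map Λ : ℝⁿ → ℝⁿ satisfying g(Λv, Λw) = g(v, w) for all v, w, such that F(p) = λ·Λ(p) + m for all p ∈ ℝⁿ. -/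
section Form

variable {n : ℕ}

lemma minkG_comm (v w : Fin n → ℝ) : minkG v w = minkG w v := by
  unfold minkG; congr 1 with i; split_ifs <;> ring

lemma minkG_add_left (u v w : Fin n → ℝ) : minkG (u + v) w = minkG u w + minkG v w := by
  simp only [minkG, ← Finset.sum_add_distrib, Pi.add_apply]; congr 1 with i; split_ifs <;> ring

lemma minkG_smul_left (c : ℝ) (v w : Fin n → ℝ) : minkG (c • v) w = c * minkG v w := by
  simp only [minkG, Finset.mul_sum, Pi.smul_apply, smul_eq_mul]; congr 1 with i; split_ifs <;> ring

lemma minkG_add_right (u v w : Fin n → ℝ) : minkG u (v + w) = minkG u v + minkG u w := by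
  rw [minkG_comm, minkG_add_left, minkG_comm v, minkG_comm w]

lemma minkG_smul_right (c : ℝ) (v w : Fin n → ℝ) : minkG v (c • w) = c * minkG v w := by
  rw [minkG_comm, minkG_smul_left, minkG_comm]

variable (n) in
noncomputable def minkForm : (Fin n → ℝ) →ₗ[ℝ] (Fin n → ℝ) →ₗ[ℝ] ℝ :=
  LinearMap.mk₂ ℝ minkG minkG_add_left minkG_smul_left minkG_add_right minkG_smul_right

lemma minkG_sub_left (u v w : Fin n → ℝ) : minkG (u - v) w = minkG u w - minkG v w :=
  LinearMap.map_sub₂ (minkForm n) u v w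

lemma minkG_sub_right (u v w : Fin n → ℝ) : minkG u (v - w) = minkG u v - minkG u w :=
  (minkForm n u).map_sub v w

lemma minkG_zero_left (w : Fin n → ℝ) : minkG 0 w = 0 :=
  LinearMap.map_zero₂ (minkForm n) w

lemma minkG_self_add (v w : Fin n → ℝ) :
    minkG (v + w) (v + w) = minkG v v + 2 * minkG v w + minkG w w := by
  rw [minkG_add_left, minkG_add_right, minkG_add_right, minkG_comm w v]; ring

lemma minkG_self_sub (v w : Fin n → ℝ) :
    minkG (v - w) (v - w) = minkG v v - 2 * minkG v w + minkG w w := by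
  rw [minkG_sub_left, minkG_sub_right, minkG_sub_right, minkG_comm w v]; ring

lemma minkG_self_smul (c : ℝ) (v : Fin n → ℝ) : minkG (c • v) (c • v) = c ^ 2 * minkG v v := by
  rw [minkG_smul_left, minkG_smul_right]; ring

lemma minkG_self_smul_neg {c : ℝ} (hc : c ≠ 0) {v : Fin n → ℝ} (hv : minkG v v < 0) :
    minkG (c • v) (c • v) < 0 := by
  rw [minkG_self_smul]; exact mul_neg_of_pos_of_neg (sq_pos_of_ne_zero hc) hv

lemma minkG_self_smul_add_of_orth {v w : Fin n → ℝ} (h : minkG v w = 0) (c : ℝ) :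
    minkG (c • v + w) (c • v + w) = c ^ 2 * minkG v v + minkG w w := by
  simp only [minkG_add_left, minkG_add_right, minkG_smul_left, minkG_smul_right, h,
    minkG_comm w v]
  ring

lemma ne_zero_of_minkG_ne_zero {v w : Fin n → ℝ} (h : minkG v w ≠ 0) : v ≠ 0 := by
  rintro rfl; exact h (minkG_zero_left w)

lemma linearIndependent_of_orth {u v : Fin n → ℝ} (hu : minkG u u ≠ 0)
    (hv : minkG v v ≠ 0) (huv : minkG u v = 0) : LinearIndependent ℝ ![u, v] := by
  refine LinearIndependent.pair_iff.2 fun s t h => ⟨?_, ?_⟩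
  · have := congrArg (minkG · u) h
    simp only [minkG_add_left, minkG_smul_left, minkG_comm v u, huv, minkG_zero_left] at this
    simpa [hu] using this
  · have := congrArg (minkG · v) h
    simp only [minkG_add_left, minkG_smul_left, huv, minkG_zero_left] at this
    simpa [hv] using this

end Form

section Causal

variable {n : ℕ} [NeZero n]

lemma minkG_self_eq (v : Fin n → ℝ) : minkG v v = 2 * v 0 ^ 2 - ∑ i, v i ^ 2 := by
  have h (i : Fin n) : (if (i : ℕ) = 0 then v i * v i else -(v i * v i)) =
      2 * (if i = 0 then v i ^ 2 else 0) - v i ^ 2 := by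
    simp only [Fin.val_eq_zero_iff]; split_ifs <;> ring
  simp only [minkG, h, Finset.sum_sub_distrib, ← Finset.mul_sum, Finset.sum_ite_eq',
    Finset.mem_univ, if_true]

lemma minkG_single_zero_left (w : Fin n → ℝ) : minkG (Pi.single 0 1) w = w 0 := by
  rw [minkG, Finset.sum_eq_single 0] <;> simp +contextual

lemma minkG_self_nonpos_of_apply_zero {v : Fin n → ℝ} (h0 : v 0 = 0) : minkG v v ≤ 0 := by
  have : 0 ≤ ∑ i, v i ^ 2 := Finset.sum_nonneg fun i _ => sq_nonneg (v i)
  rw [minkG_self_eq, h0]; linarith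

lemma minkG_self_neg_of_apply_zero {v : Fin n → ℝ} (h0 : v 0 = 0) (hv : v ≠ 0) :
    minkG v v < 0 := by
  obtain ⟨i, hi⟩ := Function.ne_iff.1 hv
  have : 0 < ∑ i, v i ^ 2 :=
    Finset.sum_pos' (fun j _ => sq_nonneg (v j)) ⟨i, Finset.mem_univ _, sq_pos_of_ne_zero hi⟩
  rw [minkG_self_eq, h0]; linarith

lemma eq_zero_of_apply_zero_of_nonneg {v : Fin n → ℝ} (h0 : v 0 = 0) (hv : 0 ≤ minkG v v) :
    v = 0 := by
  by_contra h; exact (minkG_self_neg_of_apply_zero h0 h).not_ge hv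

lemma exists_eq_smul_of_null_of_orth {u v : Fin n → ℝ} (hu : minkG u u = 0)
    (hv : minkG v v = 0) (huv : minkG u v = 0) (hv0 : v ≠ 0) : ∃ c : ℝ, u = c • v := by
  have hv0' : v 0 ≠ 0 := fun h => hv0 (eq_zero_of_apply_zero_of_nonneg h hv.ge)
  have hw : v 0 • u - u 0 • v = 0 := by
    refine eq_zero_of_apply_zero_of_nonneg
      (by simp only [Pi.sub_apply, Pi.smul_apply, smul_eq_mul]; ring) (le_of_eq ?_)
    rw [minkG_self_sub, minkG_self_smul, minkG_self_smul, minkG_smul_left, minkG_smul_right,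
      hu, hv, huv]; ring
  refine ⟨u 0 / v 0, ?_⟩
  rw [sub_eq_zero] at hw
  rw [div_eq_inv_mul, mul_smul, ← hw, inv_smul_smul₀ hv0']

lemma exists_eq_smul_of_null_of_null_sub {u v : Fin n → ℝ} (hu : minkG u u = 0)
    (hv : minkG v v = 0) (huv : minkG (u - v) (u - v) = 0) (hv0 : v ≠ 0) :
    ∃ c : ℝ, u = c • v :=
  exists_eq_smul_of_null_of_orth hu hv (by rw [minkG_self_sub, hu, hv] at huv; linarith) hv0

lemma minkG_self_neg_of_orth_timelike {τ x : Fin n → ℝ} (hτ : 0 < minkG τ τ)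
    (hx : minkG τ x = 0) (hx0 : x ≠ 0) : minkG x x < 0 := by
  have hτ0 : τ 0 ≠ 0 := fun h => (minkG_self_nonpos_of_apply_zero h).not_gt hτ
  by_contra! hxx
  have hw : minkG (τ 0 • x - x 0 • τ) (τ 0 • x - x 0 • τ) =
      τ 0 ^ 2 * minkG x x + x 0 ^ 2 * minkG τ τ := by
    rw [minkG_self_sub, minkG_self_smul, minkG_self_smul, minkG_smul_left, minkG_smul_right,
      minkG_comm x τ, hx]; ring
  have hw0 := minkG_self_nonpos_of_apply_zero (v := τ 0 • x - x 0 • τ)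
    (by simp only [Pi.sub_apply, Pi.smul_apply, smul_eq_mul]; ring)
  have hx0' : x 0 = 0 := by
    have : x 0 ^ 2 * minkG τ τ = 0 := by nlinarith [sq_nonneg (τ 0), sq_nonneg (x 0)]
    simpa [hτ.ne'] using this
  exact hx0 (eq_zero_of_apply_zero_of_nonneg hx0' hxx)

lemma exists_timelike_orth {w : Fin n → ℝ} (hw : minkG w w < 0) :
    ∃ τ : Fin n → ℝ, 0 < minkG τ τ ∧ minkG τ w = 0 := by
  have h0 := minkG_single_zero_left (n := n)
  refine ⟨w 0 • w - minkG w w • Pi.single 0 1, ?_, ?_⟩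
  · rw [minkG_self_sub, minkG_self_smul, minkG_self_smul, minkG_smul_left, minkG_smul_right,
      minkG_comm w (Pi.single 0 1), h0, h0, Pi.single_eq_same]
    nlinarith [sq_nonneg (w 0)]
  · rw [minkG_sub_left, minkG_smul_left, minkG_smul_left, h0]; ring

lemma exists_null_smul_add {τ x : Fin n → ℝ} (hτ : 0 < minkG τ τ) (hxτ : minkG x τ = 0)
    (hx0 : x ≠ 0) :
    ∃ c : ℝ, 0 < c ∧ ∀ s : ℝ, s ^ 2 = c ^ 2 → minkG (s • x + τ) (s • x + τ) = 0 := by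
  have hx : minkG x x < 0 := minkG_self_neg_of_orth_timelike hτ (by rwa [minkG_comm]) hx0
  refine ⟨√(minkG τ τ / -minkG x x), Real.sqrt_pos.2 (div_pos hτ (by linarith)), fun s hs => ?_⟩
  rw [minkG_self_smul_add_of_orth hxτ, hs, Real.sq_sqrt (div_pos hτ (by linarith)).le]
  have := hx.ne
  field_simp
  ring

lemma orth_null_iff_mem_line_or_forall {v : Fin n → ℝ}
    (hv : minkG v v = 0) (hv0 : v ≠ 0) (a x : Fin n → ℝ) :
    minkG (x - a) v = 0 ↔
      (∃ t : ℝ, x = a + t • v) ∨ ∀ t : ℝ, minkG (x - (a + t • v)) (x - (a + t • v)) ≠ 0 := by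
  have hexp (t : ℝ) : minkG (x - (a + t • v)) (x - (a + t • v)) =
      minkG (x - a) (x - a) - 2 * t * minkG (x - a) v := by
    rw [← sub_sub, minkG_self_sub, minkG_self_smul, minkG_smul_right, hv]; ring
  constructor
  · intro h
    by_cases h0 : minkG (x - a) (x - a) = 0
    · obtain ⟨t, ht⟩ := exists_eq_smul_of_null_of_orth h0 hv h hv0
      exact .inl ⟨t, by rw [← ht]; abel⟩
    · exact .inr fun t => by rwa [hexp, h, mul_zero, sub_zero]
  · rintro (⟨t, rfl⟩ | h)
    · rw [add_sub_cancel_left, minkG_smul_left, hv, mul_zero]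
    · by_contra hne
      apply h (minkG (x - a) (x - a) / (2 * minkG (x - a) v))
      rw [hexp]
      field_simp
      ring

end Causal

section Conformal

variable {n : ℕ} [NeZero n] {A : (Fin n → ℝ) →ₗ[ℝ] (Fin n → ℝ)}

/-- With `p = x - x 0 • e₀ ⟂ e₀` and `r = √(-minkG p p)`, the vectors `r • e₀ ± p` are null; the
two resulting equations give `minkG (A p) (A p) = minkG (A e₀) (A e₀) * minkG p p` and
`A e₀ ⟂ A p`. -/
lemma minkG_map_self_of_null (hA : ∀ x, minkG x x = 0 → minkG (A x) (A x) = 0)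
    (x : Fin n → ℝ) :
    minkG (A x) (A x) = minkG (A (Pi.single 0 1)) (A (Pi.single 0 1)) * minkG x x := by
  set e : Fin n → ℝ := Pi.single 0 1
  set p := x - x 0 • e
  have hp : p 0 = 0 := by simp [p, e]
  have hep : minkG e p = 0 := by rw [minkG_single_zero_left, hp]
  have hee : minkG e e = 1 := by rw [minkG_single_zero_left]; simp [e]
  have hpp := minkG_self_nonpos_of_apply_zero hp
  set r := √(-minkG p p)
  have hr : r ^ 2 = -minkG p p := Real.sq_sqrt (by linarith)
  have hnull (s : ℝ) (hs : s ^ 2 = 1) :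
      r ^ 2 * minkG (A e) (A e) + 2 * (r * (s * minkG (A e) (A p))) + minkG (A p) (A p) = 0 := by
    have := hA (r • e + s • p) (by
      rw [minkG_self_smul_add_of_orth (by rw [minkG_smul_right, hep, mul_zero]), minkG_self_smul,
        hs, hee, hr]; ring)
    rwa [map_add, map_smul, map_smul, minkG_self_add, minkG_self_smul, minkG_self_smul,
      minkG_smul_left, minkG_smul_right, hs, one_mul] at this
  have h₁ := hnull 1 (one_pow 2)
  have h₂ := hnull (-1) (by norm_num)
  have hg : minkG (A e) (A p) = 0 := by
    rcases eq_or_ne r 0 with h | h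
    · rw [eq_zero_of_apply_zero_of_nonneg hp (by nlinarith), map_zero, minkG_comm,
        minkG_zero_left]
    · exact (mul_eq_zero.1 (by linarith : r * minkG (A e) (A p) = 0)).resolve_left h
  rw [show x = x 0 • e + p by simp [p], map_add, map_smul, minkG_self_add, minkG_self_add,
    minkG_self_smul, minkG_self_smul, minkG_smul_left, minkG_smul_left, hg, hep, hee]
  linear_combination (1 / 2 : ℝ) * h₁ + (1 / 2 : ℝ) * h₂ - minkG (A e) (A e) * hr

lemma minkG_map_of_null (hA : ∀ x, minkG x x = 0 → minkG (A x) (A x) = 0) (x y : Fin n → ℝ) :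
    minkG (A x) (A y) = minkG (A (Pi.single 0 1)) (A (Pi.single 0 1)) * minkG x y := by
  have h := minkG_map_self_of_null hA (x + y)
  rw [map_add, minkG_self_add, minkG_self_add, minkG_map_self_of_null hA x,
    minkG_map_self_of_null hA y] at h
  linarith

end Conformal

section AtLeastThree

variable {m : ℕ}

lemma exists_ne_zero_orth_orth (a b : Fin (m + 3) → ℝ) :
    ∃ x ≠ 0, minkG a x = 0 ∧ minkG b x = 0 := by
  have hker : LinearMap.ker ((minkForm _ a).prod (minkForm _ b)) ≠ ⊥ :=
    LinearMap.ker_ne_bot_of_finrank_lt (by simp)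
  obtain ⟨x, hx, hx0⟩ := Submodule.exists_mem_ne_zero_of_ne_bot hker
  exact ⟨x, hx0, by simpa [minkForm, Prod.ext_iff] using hx⟩

lemma exists_spacelike_orth {w : Fin (m + 3) → ℝ} (hw : minkG w w < 0) :
    ∃ v : Fin (m + 3) → ℝ, minkG v v < 0 ∧ minkG v w = 0 := by
  obtain ⟨τ, hτ, -⟩ := exists_timelike_orth hw
  obtain ⟨x, hx0, hwx, hτx⟩ := exists_ne_zero_orth_orth w τ
  exact ⟨x, minkG_self_neg_of_orth_timelike hτ hτx hx0, by rwa [minkG_comm]⟩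

lemma exists_null_orth {w : Fin (m + 3) → ℝ} (hw : minkG w w < 0) :
    ∃ v : Fin (m + 3) → ℝ, minkG v v = 0 ∧ v ≠ 0 ∧ minkG v w = 0 := by
  obtain ⟨τ, hτ, hτw⟩ := exists_timelike_orth hw
  obtain ⟨x, hx0, hwx, hτx⟩ := exists_ne_zero_orth_orth w τ
  obtain ⟨c, -, hc⟩ := exists_null_smul_add hτ (by rwa [minkG_comm]) hx0
  refine ⟨c • x + τ, hc c rfl, ne_zero_of_minkG_ne_zero (w := τ) ?_, ?_⟩
  · rw [minkG_add_left, minkG_smul_left, minkG_comm, hτx]; simpa using hτ.ne'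
  · rw [minkG_add_left, minkG_smul_left, minkG_comm, hwx, hτw]; ring

/-- The null vectors orthogonal to `w` span `w^⊥`. -/
lemma exists_eq_smul_of_forall_null_orth {w c : Fin (m + 3) → ℝ} (hw : minkG w w < 0)
    (hc : ∀ v, minkG v v = 0 → v ≠ 0 → minkG v w = 0 → minkG c v = 0) :
    ∃ β : ℝ, c = β • w := by
  obtain ⟨τ, hτ, hτw⟩ := exists_timelike_orth hw
  have key : ∀ x ≠ 0, minkG x w = 0 → minkG x τ = 0 → minkG c x = 0 ∧ minkG c τ = 0 := by
    intro x hx0 hxw hxτ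
    obtain ⟨r, hr, hnull⟩ := exists_null_smul_add hτ hxτ hx0
    have h (s : ℝ) (hs : s ^ 2 = r ^ 2) : s * minkG c x + minkG c τ = 0 := by
      have hne : minkG (s • x + τ) τ ≠ 0 := by
        rw [minkG_add_left, minkG_smul_left, hxτ]; simpa using hτ.ne'
      have := hc _ (hnull s hs) (ne_zero_of_minkG_ne_zero hne)
        (by rw [minkG_add_left, minkG_smul_left, hxw, hτw]; ring)
      rwa [minkG_add_right, minkG_smul_right] at this
    have h₁ := h r rfl
    have h₂ := h (-r) (neg_sq r)
    have : r * minkG c x = 0 := by linarith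
    exact ⟨(mul_eq_zero.1 this).resolve_left hr.ne', by linarith⟩
  obtain ⟨x₀, hx₀, hwx₀, hτx₀⟩ := exists_ne_zero_orth_orth w τ
  have hcτ := (key x₀ hx₀ (by rwa [minkG_comm]) (by rwa [minkG_comm])).2
  set β := minkG c w / minkG w w
  have hrw : minkG (c - β • w) w = 0 := by
    rw [minkG_sub_left, minkG_smul_left, div_mul_cancel₀ _ hw.ne]; ring
  have hrτ : minkG (c - β • w) τ = 0 := by
    rw [minkG_sub_left, minkG_smul_left, minkG_comm w, hτw, hcτ]; ring
  refine ⟨β, sub_eq_zero.1 (by_contra fun hr => ?_)⟩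
  have hcr := (key _ hr hrw hrτ).1
  have hrr : minkG (c - β • w) (c - β • w) = 0 := by
    rw [minkG_sub_left, hcr, minkG_smul_left, minkG_comm w, hrw]; ring
  exact (minkG_self_neg_of_orth_timelike hτ (by rwa [minkG_comm]) hr).ne hrr

lemma exists_eq_add_smul_iff_forall_null_orth {w : Fin (m + 3) → ℝ}
    (hw : minkG w w < 0) (a x : Fin (m + 3) → ℝ) :
    (∃ t : ℝ, x = a + t • w) ↔
      ∀ v, minkG v v = 0 → v ≠ 0 → minkG v w = 0 → minkG (x - a) v = 0 := by
  refine ⟨?_, fun h => ?_⟩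
  · rintro ⟨t, rfl⟩ v - - hvw
    rw [add_sub_cancel_left, minkG_smul_left, minkG_comm, hvw, mul_zero]
  · obtain ⟨β, hβ⟩ := exists_eq_smul_of_forall_null_orth hw h
    exact ⟨β, by rw [← hβ]; abel⟩

lemma minkG_one_self_neg : minkG (1 : Fin (m + 3) → ℝ) 1 < 0 := by
  rw [minkG_self_eq]; norm_num; linarith

/-- A negative conformal factor would map two orthogonal spacelike vectors to two orthogonal
timelike ones. -/
lemma exists_pos_conformal_factor {A : (Fin (m + 3) → ℝ) →ₗ[ℝ] (Fin (m + 3) → ℝ)}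
    (hA : ∀ x, minkG x x = 0 ↔ minkG (A x) (A x) = 0) :
    ∃ c : ℝ, 0 < c ∧ ∀ x y, minkG (A x) (A y) = c * minkG x y := by
  set c := minkG (A (Pi.single 0 1)) (A (Pi.single 0 1))
  have hc := minkG_map_of_null fun x => (hA x).1
  have hc0 : c ≠ 0 := fun h0 => by
    simpa [minkG_single_zero_left] using (hA (Pi.single 0 1)).2 h0
  refine ⟨c, hc0.lt_or_gt.resolve_left fun hneg => ?_, hc⟩
  obtain ⟨v, hv, hv1⟩ := exists_spacelike_orth (minkG_one_self_neg (m := m))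
  have h1 : 0 < minkG (A 1) (A 1) := by
    rw [hc]; exact mul_pos_of_neg_of_neg hneg minkG_one_self_neg
  have hAv := minkG_self_neg_of_orth_timelike h1 (by rw [hc, minkG_comm 1 v, hv1, mul_zero])
    (ne_zero_of_minkG_ne_zero (by rw [hc]; exact (mul_pos_of_neg_of_neg hneg hv).ne'))
  rw [hc] at hAv
  exact hAv.not_gt (mul_pos_of_neg_of_neg hneg hv)

end AtLeastThree

def LightlikePreserving {n : ℕ} (E : (Fin n → ℝ) ≃ (Fin n → ℝ)) : Prop :=
  ∀ p q, minkG (p - q) (p - q) = 0 ↔ minkG (E p - E q) (E p - E q) = 0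

namespace LightlikePreserving

section

variable {n : ℕ} {E : (Fin n → ℝ) ≃ (Fin n → ℝ)}

lemma of_forall
    (hE : ∀ p q, minkG (p - q) (p - q) = 0 →
      minkG (E p - E q) (E p - E q) = 0 ∧ minkG (E.symm p - E.symm q) (E.symm p - E.symm q) = 0) :
    LightlikePreserving E :=
  fun p q => ⟨fun h => (hE p q h).1, fun h => by simpa using (hE (E p) (E q) h).2⟩

lemma trans_subRight (hE : LightlikePreserving E) (a : Fin n → ℝ) :
    LightlikePreserving (E.trans (Equiv.subRight a)) :=
  fun p q => by simpa using hE p q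

lemma symm (hE : LightlikePreserving E) : LightlikePreserving E.symm :=
  fun p q => by simpa using (hE (E.symm p) (E.symm q)).symm

lemma map_add_sub_null (hE : LightlikePreserving E) {v : Fin n → ℝ} (hv : minkG v v = 0)
    (a : Fin n → ℝ) : minkG (E (a + v) - E a) (E (a + v) - E a) = 0 :=
  (hE _ _).1 (by rwa [add_sub_cancel_left])

lemma map_add_sub_ne_zero {v : Fin n → ℝ} (hv0 : v ≠ 0) (a : Fin n → ℝ) :
    E (a + v) - E a ≠ 0 :=
  sub_ne_zero.2 (E.injective.ne (by simpa using hv0))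

variable [NeZero n]

lemma exists_map_eq_of_null (hE : LightlikePreserving E) {v : Fin n → ℝ} (hv : minkG v v = 0)
    (hv0 : v ≠ 0) (a : Fin n → ℝ) (t : ℝ) :
    ∃ s : ℝ, E (a + t • v) = E a + s • (E (a + v) - E a) := by
  have hc : minkG (E (a + t • v) - E a) (E (a + t • v) - E a) = 0 :=
    (hE _ _).1 (by rw [add_sub_cancel_left, minkG_self_smul, hv, mul_zero])
  have hcd : minkG (E (a + t • v) - E a - (E (a + v) - E a))
      (E (a + t • v) - E a - (E (a + v) - E a)) = 0 := by
    rw [sub_sub_sub_cancel_right]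
    refine (hE _ _).1 ?_
    rw [add_sub_add_left_eq_sub, show t • v - v = (t - 1) • v by rw [sub_smul, one_smul],
      minkG_self_smul, hv, mul_zero]
  obtain ⟨s, hs⟩ := exists_eq_smul_of_null_of_null_sub hc (hE.map_add_sub_null hv a) hcd
    (map_add_sub_ne_zero hv0 a)
  exact ⟨s, by rw [← hs]; abel⟩

lemma mem_null_line_iff (hE : LightlikePreserving E) {v : Fin n → ℝ} (hv : minkG v v = 0)
    (hv0 : v ≠ 0) (a x : Fin n → ℝ) :
    (∃ t : ℝ, x = a + t • v) ↔ ∃ s : ℝ, E x = E a + s • (E (a + v) - E a) := by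
  refine ⟨fun ⟨t, ht⟩ => ht ▸ hE.exists_map_eq_of_null hv hv0 a t, fun ⟨s, hs⟩ => ?_⟩
  obtain ⟨t, ht⟩ := hE.symm.exists_map_eq_of_null (hE.map_add_sub_null hv a)
    (map_add_sub_ne_zero hv0 a) (E a) s
  exact ⟨t, by simpa [← hs] using ht⟩

lemma orth_map_of_orth (hE : LightlikePreserving E) {v : Fin n → ℝ} (hv : minkG v v = 0)
    (hv0 : v ≠ 0) {a x : Fin n → ℝ} (h : minkG (x - a) v = 0) :
    minkG (E x - E a) (E (a + v) - E a) = 0 := by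
  rw [orth_null_iff_mem_line_or_forall hv hv0] at h
  rw [orth_null_iff_mem_line_or_forall (hE.map_add_sub_null hv a) (map_add_sub_ne_zero hv0 a)]
  refine h.imp (hE.mem_null_line_iff hv hv0 a x).1 fun h s hs => ?_
  obtain ⟨t, ht⟩ := (hE.mem_null_line_iff hv hv0 a (E.symm (E a + s • (E (a + v) - E a)))).2
    ⟨s, by simp⟩
  exact h t ((hE _ _).2 (by rwa [← ht, Equiv.apply_symm_apply]))

lemma orth_null_iff (hE : LightlikePreserving E) {v : Fin n → ℝ} (hv : minkG v v = 0)
    (hv0 : v ≠ 0) (a x : Fin n → ℝ) :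
    minkG (x - a) v = 0 ↔ minkG (E x - E a) (E (a + v) - E a) = 0 :=
  ⟨hE.orth_map_of_orth hv hv0, fun h => by
    simpa using hE.symm.orth_map_of_orth (hE.map_add_sub_null hv a) (map_add_sub_ne_zero hv0 a) h⟩

end

section

variable {m : ℕ} {E : (Fin (m + 3) → ℝ) ≃ (Fin (m + 3) → ℝ)}

/-- `x - y` is orthogonal to a nonzero null vector, hence so is `E x - E y`, which is therefore
not timelike. -/
lemma spacelike (hE : LightlikePreserving E) {x y : Fin (m + 3) → ℝ}
    (h : minkG (x - y) (x - y) < 0) : minkG (E x - E y) (E x - E y) < 0 := by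
  obtain ⟨v, hv, hv0, hvxy⟩ := exists_null_orth h
  have hd := hE.orth_map_of_orth hv hv0 (a := y) (x := x) (by rwa [minkG_comm])
  rcases lt_trichotomy (minkG (E x - E y) (E x - E y)) 0 with hlt | heq | hgt
  · exact hlt
  · exact absurd ((hE x y).2 heq) h.ne
  · exact absurd (hE.map_add_sub_null hv y)
      (minkG_self_neg_of_orth_timelike hgt hd (map_add_sub_ne_zero hv0 y)).ne

lemma forall_null_orth_of_forall_null_orth_map (hE : LightlikePreserving E)
    {a w x : Fin (m + 3) → ℝ}
    (h : ∀ d, minkG d d = 0 → d ≠ 0 → minkG d (E (a + w) - E a) = 0 → minkG (E x - E a) d = 0) :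
    ∀ v, minkG v v = 0 → v ≠ 0 → minkG v w = 0 → minkG (x - a) v = 0 := by
  intro v hv hv0 hvw
  refine (hE.orth_null_iff hv hv0 a x).2
    (h _ (hE.map_add_sub_null hv a) (map_add_sub_ne_zero hv0 a) ?_)
  rw [minkG_comm]
  exact hE.orth_map_of_orth hv hv0 (by rwa [add_sub_cancel_left, minkG_comm])

lemma mem_spacelike_line_iff (hE : LightlikePreserving E) {w : Fin (m + 3) → ℝ}
    (hw : minkG w w < 0) (a x : Fin (m + 3) → ℝ) :
    (∃ t : ℝ, x = a + t • w) ↔ ∃ s : ℝ, E x = E a + s • (E (a + w) - E a) := by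
  have hD := hE.spacelike (x := a + w) (y := a) (by rwa [add_sub_cancel_left])
  rw [exists_eq_add_smul_iff_forall_null_orth hw, exists_eq_add_smul_iff_forall_null_orth hD]
  refine ⟨fun h => ?_, hE.forall_null_orth_of_forall_null_orth_map⟩
  simpa using hE.symm.forall_null_orth_of_forall_null_orth_map (a := E a) (w := E (a + w) - E a)
    (x := E x) (by simpa using h)

/-- A null hyperplane containing the image of the line `a + ℝ w` contains the image of `b + ℝ w`
as soon as it meets it, since this holds for the preimages. -/
lemma exists_map_add_sub_eq_smul (hE : LightlikePreserving E) {w : Fin (m + 3) → ℝ}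
    (hw : minkG w w < 0) (a b : Fin (m + 3) → ℝ) :
    ∃ c : ℝ, E (b + w) - E b = c • (E (a + w) - E a) := by
  refine exists_eq_smul_of_forall_null_orth
    (hE.spacelike (x := a + w) (y := a) (by rwa [add_sub_cancel_left])) fun d hd hd0 hdD => ?_
  have htr (y : Fin (m + 3) → ℝ) :
      minkG (y - E a) d = 0 ↔ minkG (E.symm y - a) (E.symm (E a + d) - a) = 0 := by
    simpa using hE.symm.orth_null_iff hd hd0 (E a) y
  have hwv : minkG w (E.symm (E a + d) - a) = 0 := by
    simpa using (htr (E (a + w))).1 (by rwa [minkG_comm])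
  have hconst (s : ℝ) : minkG (E b - E a) d + s * minkG (E (b + w) - E b) d = 0 ↔
      minkG (b - a) (E.symm (E a + d) - a) = 0 := by
    obtain ⟨t, ht⟩ := (hE.mem_spacelike_line_iff hw b (E.symm (E b + s • (E (b + w) - E b)))).2
      ⟨s, by simp⟩
    rw [← minkG_smul_left, ← minkG_add_left, ← add_sub_right_comm, htr, ht,
      add_sub_right_comm, minkG_add_left, minkG_smul_left, hwv, mul_zero, add_zero]
  by_contra hne
  have h₀ := (hconst (-minkG (E b - E a) d / minkG (E (b + w) - E b) d)).1 (by field_simp; ring)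
  have h₁ := (hconst (-minkG (E b - E a) d / minkG (E (b + w) - E b) d + 1)).2 h₀
  field_simp at h₁
  exact hne (by linarith)

variable (hE : LightlikePreserving E) (hE0 : E 0 = 0)
include hE hE0

lemma exists_eq_smul_iff {u : Fin (m + 3) → ℝ} (hu : minkG u u < 0) (x : Fin (m + 3) → ℝ) :
    (∃ t : ℝ, x = t • u) ↔ ∃ s : ℝ, E x = s • E u := by
  simpa [hE0] using hE.mem_spacelike_line_iff hu 0 x

lemma map_self_neg {u : Fin (m + 3) → ℝ} (hu : minkG u u < 0) : minkG (E u) (E u) < 0 := by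
  simpa [hE0] using hE.spacelike (x := u) (y := 0) (by simpa)

lemma map_ne_zero {u : Fin (m + 3) → ℝ} (hu : minkG u u < 0) : E u ≠ 0 :=
  ne_zero_of_minkG_ne_zero (hE.map_self_neg hE0 hu).ne

lemma linearIndependent_map {u v : Fin (m + 3) → ℝ} (hu : minkG u u < 0)
    (huv : LinearIndependent ℝ ![u, v]) : LinearIndependent ℝ ![E u, E v] := by
  refine (LinearIndependent.pair_iff' (hE.map_ne_zero hE0 hu)).2 fun a ha => ?_
  obtain ⟨t, ht⟩ := (hE.exists_eq_smul_iff hE0 hu v).2 ⟨a, ha.symm⟩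
  exact (LinearIndependent.pair_iff' (ne_zero_of_minkG_ne_zero hu.ne)).1 huv t ht.symm

lemma map_add_of_linearIndependent {u v : Fin (m + 3) → ℝ} (hu : minkG u u < 0)
    (hv : minkG v v < 0) (huv : LinearIndependent ℝ ![u, v]) : E (u + v) = E u + E v := by
  obtain ⟨c₁, h₁⟩ := hE.exists_map_add_sub_eq_smul hu 0 v
  obtain ⟨c₂, h₂⟩ := hE.exists_map_add_sub_eq_smul hv 0 u
  simp only [zero_add, hE0, sub_zero, add_comm v u] at h₁ h₂
  have hc := LinearIndependent.pair_iff.1 (hE.linearIndependent_map hE0 hu huv) (c₁ - 1) (1 - c₂)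
    (by linear_combination (norm := module) h₂ - h₁)
  rw [sub_eq_zero.1 hc.1, one_smul] at h₁
  rw [← h₁]; abel

lemma smul_eq_of_orth {u v : Fin (m + 3) → ℝ} (hu : minkG u u < 0) (hv : minkG v v < 0)
    (huv : minkG u v = 0) {t a b : ℝ} (ha : E (t • u) = a • E u) (hb : E (t • v) = b • E v) :
    a = b := by
  have hEuv := hE.linearIndependent_map hE0 hu (linearIndependent_of_orth hu.ne hv.ne huv)
  rcases eq_or_ne t 0 with rfl | ht
  · rw [zero_smul, hE0] at ha hb
    have := LinearIndependent.pair_iff.1 hEuv a b (by rw [← ha, ← hb, add_zero])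
    rw [this.1, this.2]
  have huv' : minkG (u + v) (u + v) < 0 := by
    rw [minkG_self_add, huv]; linarith
  obtain ⟨c, hc⟩ := (hE.exists_eq_smul_iff hE0 huv' (t • (u + v))).1 ⟨t, rfl⟩
  have htu := minkG_self_smul_neg ht hu
  have htv := minkG_self_smul_neg ht hv
  have htuv : LinearIndependent ℝ ![t • u, t • v] := linearIndependent_of_orth htu.ne htv.ne
    (by rw [minkG_smul_left, minkG_smul_right, huv, mul_zero, mul_zero])
  rw [smul_add, hE.map_add_of_linearIndependent hE0 htu htv htuv, ha, hb,
    hE.map_add_of_linearIndependent hE0 hu hv (linearIndependent_of_orth hu.ne hv.ne huv)] at hc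
  have := LinearIndependent.pair_iff.1 hEuv (a - c) (b - c)
    (by linear_combination (norm := module) hc)
  linarith [this.1, this.2]

lemma map_mul_smul {u : Fin (m + 3) → ℝ} (hu : minkG u u < 0) {s r a b : ℝ}
    (ha : E (s • u) = a • E u) (hb : E (r • u) = b • E u) : E ((s * r) • u) = (a * b) • E u := by
  rcases eq_or_ne r 0 with rfl | hr
  · rw [zero_smul, hE0, eq_comm, smul_eq_zero] at hb
    rw [mul_zero, zero_smul, hE0, hb.resolve_right (hE.map_ne_zero hE0 hu), mul_zero, zero_smul]
  obtain ⟨v, hv, hvu⟩ := exists_spacelike_orth hu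
  have huv : minkG u v = 0 := by rw [minkG_comm, hvu]
  have hru := minkG_self_smul_neg hr hu
  obtain ⟨c, hc⟩ := (hE.exists_eq_smul_iff hE0 hru (s • r • u)).1 ⟨s, rfl⟩
  obtain ⟨d, hd⟩ := (hE.exists_eq_smul_iff hE0 hv (s • v)).1 ⟨s, rfl⟩
  have hca : c = a :=
    (hE.smul_eq_of_orth hE0 hru hv (by rw [minkG_smul_left, huv, mul_zero]) hc hd).trans
      (hE.smul_eq_of_orth hE0 hu hv huv ha hd).symm
  rw [mul_smul, hc, hca, hb, smul_smul]

lemma map_add_smul {u : Fin (m + 3) → ℝ} (hu : minkG u u < 0) {s r a b : ℝ}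
    (ha : E (s • u) = a • E u) (hb : E (r • u) = b • E u) : E ((s + r) • u) = (a + b) • E u := by
  rcases eq_or_ne s 0 with rfl | hs
  · rw [zero_smul, hE0, eq_comm] at ha
    rw [zero_add, hb, add_smul, ha, zero_add]
  obtain ⟨v, hv, hvu⟩ := exists_spacelike_orth hu
  have huv : minkG u v = 0 := by rw [minkG_comm, hvu]
  have hline {t c : ℝ} (h : E (t • u) = c • E u) : E (t • u + v) = c • E u + E v := by
    rcases eq_or_ne t 0 with rfl | ht
    · rw [zero_smul, hE0] at h
      rw [zero_smul, zero_add, ← h, zero_add]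
    have htu := minkG_self_smul_neg ht hu
    rw [hE.map_add_of_linearIndependent hE0 htu hv (linearIndependent_of_orth htu.ne hv.ne
      (by rw [minkG_smul_left, huv, mul_zero])), h]
  have hrv : minkG (r • u + v) (r • u + v) < 0 := by
    rw [minkG_self_smul_add_of_orth huv]; nlinarith [sq_nonneg r]
  have hind : LinearIndependent ℝ ![s • u, r • u + v] := by
    refine LinearIndependent.pair_iff.2 fun a b h => ?_
    have := LinearIndependent.pair_iff.1 (linearIndependent_of_orth hu.ne hv.ne huv)
      (a * s + b * r) b (by rw [← h]; module)
    exact ⟨by simpa [hs, this.2] using this.1, this.2⟩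
  obtain ⟨c, hc⟩ := (hE.exists_eq_smul_iff hE0 hu ((s + r) • u)).1 ⟨s + r, rfl⟩
  have : c • E u + E v = (a + b) • E u + E v :=
    calc c • E u + E v = E (s • u + (r • u + v)) := by rw [← hline hc, add_smul, add_assoc]
      _ = (a + b) • E u + E v := by
        rw [hE.map_add_of_linearIndependent hE0 (minkG_self_smul_neg hs hu) hrv hind, ha,
          hline hb, add_smul, add_assoc]
  rw [hc, add_right_cancel this]

/-- `E` acts on the spacelike line `ℝ u` by a function `σ : ℝ → ℝ`, which is a ring endomorphism
of `ℝ`, hence the identity. -/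
lemma map_smul_of_spacelike {u : Fin (m + 3) → ℝ} (hu : minkG u u < 0) (t : ℝ) :
    E (t • u) = t • E u := by
  choose σ hσ using fun t : ℝ => (hE.exists_eq_smul_iff hE0 hu (t • u)).1 ⟨t, rfl⟩
  have hσ_eq {s a : ℝ} (h : E (s • u) = a • E u) : σ s = a :=
    smul_left_injective ℝ (hE.map_ne_zero hE0 hu) ((hσ s).symm.trans h)
  let f : ℝ →+* ℝ :=
    { toFun := σ
      map_one' := hσ_eq (by rw [one_smul, one_smul])
      map_mul' := fun s r => hσ_eq (hE.map_mul_smul hE0 hu (hσ s) (hσ r))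
      map_zero' := hσ_eq (by rw [zero_smul, zero_smul, hE0])
      map_add' := fun s r => hσ_eq (hE.map_add_smul hE0 hu (hσ s) (hσ r)) }
  rw [hσ, show σ t = t from RingHom.congr_fun (Subsingleton.elim f (RingHom.id ℝ)) t]

lemma map_smul_of_apply_zero {p : Fin (m + 3) → ℝ} (hp : p 0 = 0) (c : ℝ) :
    E (c • p) = c • E p := by
  rcases eq_or_ne p 0 with rfl | hp0
  · rw [smul_zero, hE0, smul_zero]
  exact hE.map_smul_of_spacelike hE0 (minkG_self_neg_of_apply_zero hp hp0) c

lemma map_add_of_apply_zero {p q : Fin (m + 3) → ℝ} (hp : p 0 = 0) (hq : q 0 = 0) :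
    E (p + q) = E p + E q := by
  rcases eq_or_ne p 0 with rfl | hp0
  · rw [zero_add, hE0, zero_add]
  by_cases hpq : LinearIndependent ℝ ![p, q]
  · exact hE.map_add_of_linearIndependent hE0 (minkG_self_neg_of_apply_zero hp hp0)
      (minkG_self_neg_of_apply_zero hq (hpq.ne_zero 1)) hpq
  obtain ⟨a, rfl⟩ : ∃ a : ℝ, a • p = q := by
    simpa [LinearIndependent.pair_iff' hp0] using hpq
  calc E (p + a • p) = E ((1 + a) • p) := by rw [add_smul, one_smul]
    _ = E p + E (a • p) := by
      rw [hE.map_smul_of_apply_zero hE0 hp, hE.map_smul_of_apply_zero hE0 hp, add_smul, one_smul]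

lemma map_eq_smul_add (x : Fin (m + 3) → ℝ) : E x = x 0 • E 1 + E (x - x 0 • 1) := by
  have hp : (x - x 0 • 1) 0 = 0 := by simp
  rcases eq_or_ne (x 0) 0 with h0 | h0
  · rw [h0, zero_smul, zero_smul, zero_add, sub_zero]
  rcases eq_or_ne (x - x 0 • 1) 0 with hp0 | hp0
  · have hx : x = x 0 • 1 := sub_eq_zero.1 hp0
    rw [hp0, hE0, add_zero, ← hE.map_smul_of_spacelike hE0 minkG_one_self_neg, ← hx]
  have hind : LinearIndependent ℝ ![x 0 • (1 : Fin (m + 3) → ℝ), x - x 0 • 1] := by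
    refine LinearIndependent.pair_iff.2 fun a b h => ?_
    have ha : a = 0 := by simpa [hp, h0] using congrFun h 0
    exact ⟨ha, by simpa [ha, hp0] using h⟩
  rw [← hE.map_smul_of_spacelike hE0 minkG_one_self_neg, ← hE.map_add_of_linearIndependent hE0
    (minkG_self_smul_neg h0 minkG_one_self_neg) (minkG_self_neg_of_apply_zero hp hp0) hind,
    add_sub_cancel]

lemma isLinearMap : IsLinearMap ℝ E := by
  refine ⟨fun x y => ?_, fun c x => ?_⟩
  · rw [hE.map_eq_smul_add hE0 (x + y), hE.map_eq_smul_add hE0 x, hE.map_eq_smul_add hE0 y,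
      show x + y - (x + y) 0 • 1 = (x - x 0 • 1) + (y - y 0 • 1) by simp; module,
      hE.map_add_of_apply_zero hE0 (by simp) (by simp), Pi.add_apply, add_smul]
    abel
  · rw [hE.map_eq_smul_add hE0 (c • x), hE.map_eq_smul_add hE0 x,
      show c • x - (c • x) 0 • 1 = c • (x - x 0 • 1) by simp; module,
      hE.map_smul_of_apply_zero hE0 (by simp), Pi.smul_apply, smul_eq_mul, smul_add, mul_smul]

end

end LightlikePreserving

/-- **Alexandrov.** For `n ≥ 3`, a bijection of Minkowski space `ℝⁿ` which,
together with its inverse, preserves lightlike separation is the composition of a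
Poincaré transformation with a dilation. -/
theorem alexandrov (m : ℕ)
    (F : (Fin (m + 3) → ℝ) ≃ (Fin (m + 3) → ℝ))
    (hF : ∀ p q, minkG (p - q) (p - q) = 0 →
      minkG (F p - F q) (F p - F q) = 0 ∧
      minkG (F.symm p - F.symm q) (F.symm p - F.symm q) = 0) :
    ∃ (lam : ℝ) (mm : Fin (m + 3) → ℝ)
      (Λ : (Fin (m + 3) → ℝ) →ₗ[ℝ] (Fin (m + 3) → ℝ)),
      0 < lam ∧
      (∀ v w, minkG (Λ v) (Λ w) = minkG v w) ∧
      ∀ p, F p = lam • Λ p + mm := by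
  set E := F.trans (Equiv.subRight (F 0))
  have hE : LightlikePreserving E := (LightlikePreserving.of_forall hF).trans_subRight (F 0)
  have hE0 : E 0 = 0 := sub_self (F 0)
  set A := IsLinearMap.mk' E (hE.isLinearMap hE0)
  obtain ⟨c, hc, hA⟩ := exists_pos_conformal_factor (A := A) fun x => by
    have h := hE x 0; rwa [sub_zero, hE0, sub_zero] at h
  have hsc : 0 < √c := Real.sqrt_pos.2 hc
  refine ⟨√c, F 0, (√c)⁻¹ • A, hsc, fun v w => ?_, fun p => ?_⟩
  · rw [LinearMap.smul_apply, LinearMap.smul_apply, minkG_smul_left, minkG_smul_right, hA,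
      ← mul_assoc, ← mul_assoc, ← mul_inv, Real.mul_self_sqrt hc.le, inv_mul_cancel₀ hc.ne',
      one_mul]
  · simp [A, E, smul_smul, mul_inv_cancel₀ hsc.ne']
end

section
/- In two-dimensional Minkowski space the Alexandrov–Zeeman conclusion fails: let h : ℝ → ℝ be a smooth bijection with h'(t) > 0 for all t, and define f : ℝ² → ℝ² by f(x, y) = ((h(x−y) + h(x+y))/2, (h(x+y) − h(x−y))/2) (i.e. f acts as (u, v) ↦ (h(u), h(v)) in the lightcone coordinates u = x − y, v = x + y). Then f is a bijection of ℝ² such that for all p, q ∈ ℝ²: g(p − q, p − q) = 0 if and only if g(f(p) − f(q), f(p) − f(q)) = 0; and f is an affine map if and only if h is affine (h(t) = at + b). -/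
/-- The two-dimensional Minkowski bilinear form on `ℝ²`: `g((x,y),(x',y')) = x·x' − y·y'`. -/
def mink2 (p q : ℝ × ℝ) : ℝ := p.1 * q.1 - p.2 * q.2

/-- In two dimensions the Alexandrov–Zeeman conclusion fails: for any
smooth bijection `h : ℝ → ℝ` with everywhere positive derivative, the map acting as
`(u,v) ↦ (h(u), h(v))` in lightcone coordinates `u = x − y`, `v = x + y` is a bijection
of `ℝ²` preserving lightlike separation in both directions, yet it is affine
iff `h` is affine. -/
theorem two_dim_counterexample
    (h : ℝ → ℝ) (hsmooth : ContDiff ℝ (⊤ : ℕ∞) h) (hbij : Function.Bijective h)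
    (hpos : ∀ t, 0 < deriv h t)
    (f : ℝ × ℝ → ℝ × ℝ)
    (hf : ∀ x y : ℝ,
      f (x, y) = ((h (x - y) + h (x + y)) / 2, (h (x + y) - h (x - y)) / 2)) :
    Function.Bijective f ∧
    (∀ p q : ℝ × ℝ, mink2 (p - q) (p - q) = 0 ↔ mink2 (f p - f q) (f p - f q) = 0) ∧
    ((∃ (A : (ℝ × ℝ) →ₗ[ℝ] ℝ × ℝ) (c : ℝ × ℝ), ∀ p, f p = A p + c) ↔
      ∃ a b : ℝ, ∀ t, h t = a * t + b) := by
  set k := Function.invFun h with hk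
  have hki : ∀ t, k (h t) = t := fun t => Function.leftInverse_invFun hbij.1 t
  have hik : ∀ t, h (k t) = t := fun t => Function.rightInverse_invFun hbij.2 t
  have hfp : ∀ p : ℝ × ℝ, f p =
      ((h (p.1 - p.2) + h (p.1 + p.2)) / 2, (h (p.1 + p.2) - h (p.1 - p.2)) / 2) := by
    intro p; rw [← hf p.1 p.2]
  refine ⟨?_, ?_, ?_⟩
  · -- bijectivity
    rw [Function.bijective_iff_has_inverse]
    refine ⟨fun p => ((k (p.1 - p.2) + k (p.1 + p.2)) / 2,
        (k (p.1 + p.2) - k (p.1 - p.2)) / 2), ?_, ?_⟩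
    · intro p
      rw [hfp p]
      simp only
      have e1 : (h (p.1 - p.2) + h (p.1 + p.2)) / 2 - (h (p.1 + p.2) - h (p.1 - p.2)) / 2
          = h (p.1 - p.2) := by ring
      have e2 : (h (p.1 - p.2) + h (p.1 + p.2)) / 2 + (h (p.1 + p.2) - h (p.1 - p.2)) / 2
          = h (p.1 + p.2) := by ring
      rw [e1, e2, hki, hki]
      ext <;> simp <;> ring
    · intro p
      have e1 : (k (p.1 - p.2) + k (p.1 + p.2)) / 2 - (k (p.1 + p.2) - k (p.1 - p.2)) / 2
          = k (p.1 - p.2) := by ring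
      have e2 : (k (p.1 - p.2) + k (p.1 + p.2)) / 2 + (k (p.1 + p.2) - k (p.1 - p.2)) / 2
          = k (p.1 + p.2) := by ring
      rw [hfp]
      simp only [e1, e2, hik]
      ext <;> simp <;> ring
  · -- lightlike preservation
    intro p q
    have hm : mink2 (p - q) (p - q)
        = ((p.1 - p.2) - (q.1 - q.2)) * ((p.1 + p.2) - (q.1 + q.2)) := by
      simp [mink2]; ring
    have hm' : mink2 (f p - f q) (f p - f q)
        = (h (p.1 - p.2) - h (q.1 - q.2)) * (h (p.1 + p.2) - h (q.1 + q.2)) := by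
      rw [hfp p, hfp q]
      simp [mink2]; ring
    rw [hm, hm', mul_eq_zero, mul_eq_zero, sub_eq_zero, sub_eq_zero, sub_eq_zero,
      sub_eq_zero]
    constructor
    · rintro (e | e) <;> [left; right] <;> rw [e]
    · rintro (e | e) <;> [left; right] <;> exact hbij.1 e
  · constructor
    · rintro ⟨A, c, hA⟩
      refine ⟨(A (1, 0)).1 + (A (1, 0)).2, c.1 + c.2, fun t => ?_⟩
      have := hA (t, 0)
      rw [hf t 0] at this
      have hA1 : A (t, 0) = t • A (1, 0) := by
        rw [← A.map_smul]; congr 1; ext <;> simp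
      have h1 := congrArg Prod.fst this
      have h2 := congrArg Prod.snd this
      simp only [hA1, Prod.smul_fst, Prod.smul_snd, smul_eq_mul, Prod.fst_add,
        Prod.snd_add] at h1 h2
      have : h (t + 0) = h t := by norm_num
      nlinarith [h1, h2]
    · rintro ⟨a, b, hab⟩
      refine ⟨a • LinearMap.id, (b, 0), fun p => ?_⟩
      rw [hfp p]
      simp [hab, Prod.ext_iff]
      constructor <;> ring
end

section
/- (Main theorem of affine geometry) Let S be an affine space over a real vector space V with 2 ≤ dim V < ∞, and let F : S → S be a bijective collineation, i.e. whenever three points p, q, r of S lie on a common affine line, the points F(p), F(q), F(r) also lie on a common affine line. Then F is an affine map: there exists a linear map f : V → V such that F(p + v) = F(p) + f(v) for all p ∈ S and v ∈ V. -/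
/-!
Fix a base point and pass to the map `G : V → V`, `G 0 = 0`, induced by `F`. A collineation sends
the affine span of a set into the affine span of its image, since (as `2 ≠ 0`) affine spans are
generated by lines. As `G` is onto, the image of an affine basis still spans, and a dimension
count then shows that `G` cannot squeeze three non-collinear points onto a line: `G⁻¹` is a
collineation as well. So `G` maps pairs of disjoint coplanar lines to such pairs, hence
parallelograms to parallelograms, and `G` is additive. Lines through `0` go to lines through `0`,
giving `G (t • x) = σ t • G x` with `σ` independent of `x` as soon as `dim V ≥ 2`; then `σ` is a
ring endomorphism of `ℝ`, i.e. the identity.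
-/

open Module Function

def PreservesCollinear (k : Type*) {V P V₂ P₂ : Type*} [DivisionRing k] [AddCommGroup V]
    [Module k V] [AddTorsor V P] [AddCommGroup V₂] [Module k V₂] [AddTorsor V₂ P₂]
    (F : P → P₂) : Prop :=
  ∀ p q r : P, Collinear k ({p, q, r} : Set P) → Collinear k ({F p, F q, F r} : Set P₂)

section Torsor

variable {k V P V₁ P₁ V₂ P₂ : Type*} [DivisionRing k]
  [AddCommGroup V] [Module k V] [AddTorsor V P]
  [AddCommGroup V₁] [Module k V₁] [AddTorsor V₁ P₁]
  [AddCommGroup V₂] [Module k V₂] [AddTorsor V₂ P₂]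

theorem Collinear.image (f : P →ᵃ[k] P₂) {s : Set P} (h : Collinear k s) :
    Collinear k (f '' s) := by
  have hmap := lift_rank_map_le f.linear (vectorSpan k s)
  rw [AffineMap.map_vectorSpan] at hmap
  exact Cardinal.lift_le_one_iff.1 (hmap.trans (Cardinal.lift_le_one_iff.2 h))

theorem AffineMap.preservesCollinear (f : P →ᵃ[k] P₂) : PreservesCollinear k f := by
  intro p q r h
  simpa [Set.image_insert_eq] using h.image f

theorem PreservesCollinear.comp {g : P₁ → P₂} {f : P → P₁} (hg : PreservesCollinear k g)
    (hf : PreservesCollinear k f) : PreservesCollinear k (g ∘ f) :=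
  fun p q r h => hg _ _ _ (hf p q r h)

variable {F : P → P₂}

theorem PreservesCollinear.map_mem_affineSpan_pair (hF : PreservesCollinear k F)
    (hinj : Injective F) {a b x : P} (hab : a ≠ b) (hx : x ∈ line[k, a, b]) :
    F x ∈ line[k, F a, F b] := by
  have hcol : Collinear k ({a, b, x} : Set P) :=
    (collinear_insert_of_mem_affineSpan_pair hx).subset (by simp [Set.insert_subset_iff])
  exact (hF a b x hcol).mem_affineSpan_of_mem_of_ne (by simp) (by simp) (by simp)
    (hinj.ne hab)

theorem PreservesCollinear.map_lineMap_mem (hF : PreservesCollinear k F) (hinj : Injective F)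
    {M : AffineSubspace k P₂} {a b : P} (ha : F a ∈ M) (hb : F b ∈ M) (t : k) :
    F (AffineMap.lineMap a b t) ∈ M := by
  rcases eq_or_ne a b with rfl | hab
  · rwa [AffineMap.lineMap_same_apply]
  exact affineSpan_pair_le_of_mem_of_mem ha hb
    (hF.map_mem_affineSpan_pair hinj hab (AffineMap.lineMap_mem_affineSpan_pair t a b))

theorem finrank_add_one_le_ncard_of_affineSpan_eq_top [FiniteDimensional k V] {s : Set P}
    (hs : s.Finite) (hspan : affineSpan k s = ⊤) : finrank k V + 1 ≤ s.ncard := by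
  have := hs.fintype
  have : Nonempty s :=
    ((bot_lt_affineSpan k).1 (hspan ▸ (AffineSubspace.bot_ne_top k V P).symm.bot_lt)).to_subtype
  have hle := finrank_vectorSpan_range_add_one_le k ((↑) : s → P)
  rwa [Subtype.range_coe, ← direction_affineSpan, hspan, AffineSubspace.direction_top,
    finrank_top, Fintype.card_eq_nat_card, Nat.card_coe_set_eq] at hle

end Torsor

section Module

variable {k V : Type*} [Field k] [AddCommGroup V] [Module k V] {G : V → V}

theorem PreservesCollinear.map_mem_affineSpan [NeZero (2 : k)] (hG : PreservesCollinear k G)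
    (hinj : Injective G) {s : Set V} {x : V} (hx : x ∈ affineSpan k s) :
    G x ∈ affineSpan k (G '' s) := by
  refine affineSpan_induction hx (fun y hy => subset_affineSpan k _ (Set.mem_image_of_mem G hy))
    fun c u v w hu hv hw => ?_
  rw [vsub_eq_sub, vadd_eq_add]
  by_cases hc : c = 1
  · -- `u - v + w` is the reflection of `v` in the midpoint of `u` and `w`
    have := hG.map_lineMap_mem hinj hv (hG.map_lineMap_mem hinj hu hw (1 / 2 : k)) 2
    convert this using 2
    simp only [AffineMap.lineMap_apply_module', hc]
    match_scalars <;> field_simp <;> ring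
  · have h1c : 1 - c ≠ 0 := sub_ne_zero.2 (Ne.symm hc)
    have := hG.map_lineMap_mem hinj hu (hG.map_lineMap_mem hinj hv hw (1 / (1 - c))) (1 - c)
    convert this using 2
    simp only [AffineMap.lineMap_apply_module']
    match_scalars <;> field_simp <;> ring

theorem PreservesCollinear.map_mem_span [NeZero (2 : k)] (hG : PreservesCollinear k G)
    (hinj : Injective G) (hG0 : G 0 = 0) {s : Set V} {x : V} (hx : x ∈ Submodule.span k s) :
    G x ∈ Submodule.span k (G '' s) := by
  rw [← SetLike.mem_coe, ← affineSpan_insert_zero] at hx ⊢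
  simpa only [Set.image_insert_eq, hG0] using SetLike.mem_coe.2 (hG.map_mem_affineSpan hinj hx)

end Module

section FiniteDimensional

variable {k V : Type*} [Field k] [NeZero (2 : k)] [AddCommGroup V] [Module k V]

theorem PreservesCollinear.affineSpan_image_eq_top {G : V → V} (hG : PreservesCollinear k G)
    (hbij : Bijective G) {s : Set V} (hs : affineSpan k s = ⊤) : affineSpan k (G '' s) = ⊤ := by
  refine eq_top_iff.2 fun y _ => ?_
  obtain ⟨x, rfl⟩ := hbij.2 y
  exact hG.map_mem_affineSpan hbij.1 (hs ▸ AffineSubspace.mem_top k V x)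

theorem PreservesCollinear.collinear_of_collinear_image [FiniteDimensional k V] {G : V → V}
    (hG : PreservesCollinear k G) (hbij : Bijective G) {a b c : V}
    (h : Collinear k ({G a, G b, G c} : Set V)) : Collinear k ({a, b, c} : Set V) := by
  by_contra hnc
  have hind := (affineIndependent_iff_not_collinear_set.2 hnc).range
  rw [Matrix.range_cons, Matrix.range_cons_cons_empty, Set.singleton_union] at hind
  obtain ⟨hab, hac, hbc⟩ : a ≠ b ∧ a ≠ c ∧ b ≠ c := by
    refine ⟨?_, ?_, ?_⟩ <;> rintro rfl <;> exact hnc (by simp [collinear_pair])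
  obtain ⟨t, hst, htind, htop⟩ := exists_subset_affineIndependent_affineSpan_eq_top hind
  have htfin := finite_set_of_fin_dim_affineIndependent k htind
  have hcard : t.ncard = finrank k V + 1 := by
    have := htfin.fintype
    rw [← Nat.card_coe_set_eq, Nat.card_eq_fintype_card]
    exact htind.affineSpan_eq_top_iff_card_eq_finrank_add_one.1 (by simpa using htop)
  -- `G c` lies on the line through `G a` and `G b`, so it can be dropped from a spanning set
  have hspan : affineSpan k (G '' (t \ {c})) = ⊤ := by
    refine eq_top_iff.2 ((hG.affineSpan_image_eq_top hbij htop).ge.trans (affineSpan_le.2 ?_))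
    rintro _ ⟨x, hx, rfl⟩
    by_cases hxc : x = c
    · rw [hxc]
      have ha : G a ∈ G '' (t \ {c}) := ⟨a, ⟨hst (by simp), hac⟩, rfl⟩
      have hb : G b ∈ G '' (t \ {c}) := ⟨b, ⟨hst (by simp), hbc⟩, rfl⟩
      refine affineSpan_pair_le_of_mem_of_mem (subset_affineSpan k _ ha)
        (subset_affineSpan k _ hb) ?_
      exact h.mem_affineSpan_of_mem_of_ne (by simp) (by simp) (by simp) (hbij.1.ne hab)
    · exact subset_affineSpan k _ ⟨x, ⟨hx, hxc⟩, rfl⟩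
  have hle := finrank_add_one_le_ncard_of_affineSpan_eq_top (htfin.sdiff.image G) hspan
  have hcard_image := Set.ncard_image_le (f := G) (htfin.sdiff (t := {c}))
  rw [Set.ncard_sdiff_singleton_of_mem (hst (by simp)), hcard] at hcard_image
  omega

theorem PreservesCollinear.symm [FiniteDimensional k V] {G : V ≃ V}
    (hG : PreservesCollinear k G) : PreservesCollinear k G.symm :=
  fun a b c h => hG.collinear_of_collinear_image G.bijective (by simpa using h)

end FiniteDimensional

section Semilinear

variable {k V : Type*} [Field k] [AddCommGroup V] [Module k V]

theorem linearIndependent_pair_iff_not_collinear {u v : V} :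
    LinearIndependent k ![u, v] ↔ ¬ Collinear k ({0, u, v} : Set V) := by
  have hspan : vectorSpan k ({0, u, v} : Set V) = Submodule.span k (Set.range ![u, v]) := by
    rw [vectorSpan_eq_span_vsub_set_right k (Set.mem_insert 0 _), Matrix.range_cons_cons_empty]
    simp only [vsub_eq_sub, sub_zero, Set.image_id', Submodule.span_insert_zero]
  have hle : Set.finrank k (Set.range ![u, v]) ≤ 2 := finrank_range_le_card ![u, v]
  have := FiniteDimensional.span_of_finite k (Set.finite_range ![u, v])
  rw [linearIndependent_iff_card_eq_finrank_span, Collinear, hspan, ← finrank_eq_rank,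
    Fintype.card_fin]
  rw [Set.finrank] at hle ⊢
  norm_cast
  omega

theorem linearIndependent_pair_of_mem_span_singleton {u x w : V} (hx : x ∈ k ∙ u) (hx0 : x ≠ 0)
    (hw : w ∉ k ∙ u) : LinearIndependent k ![x, w] :=
  (LinearIndependent.pair_iff' hx0).2 fun a h => hw (h ▸ Submodule.smul_mem _ a hx)

theorem exists_notMem_span_singleton (hV : 1 < Module.rank k V) (u : V) : ∃ w, w ∉ k ∙ u := by
  refine SetLike.exists_not_mem_of_ne_top _ fun htop => hV.not_ge ?_
  have hle := rank_span_le (R := k) ({u} : Set V)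
  rwa [htop, rank_top, Cardinal.mk_singleton] at hle

theorem AddMonoidHom.exists_eq_smul_of_forall_mem_span_singleton (hV : 1 < Module.rank k V)
    (f : V →+ V) (hf : ∀ y, f y ∈ k ∙ y) : ∃ c : k, ∀ y, f y = c • y := by
  choose c hc using fun y => Submodule.mem_span_singleton.1 (hf y)
  have hpair {y z : V} (h : LinearIndependent k ![y, z]) : c y = c z := by
    have hsum : (c (y + z) - c y) • y + (c (y + z) - c z) • z = 0 := by
      rw [sub_smul, sub_smul, hc y, hc z, ← add_sub_add_comm, ← smul_add, hc, map_add, sub_self]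
    obtain ⟨hy, hz⟩ := LinearIndependent.pair_iff.1 h _ _ hsum
    exact (sub_eq_zero.1 hy).symm.trans (sub_eq_zero.1 hz)
  have hconst {y z : V} (hy : y ≠ 0) (hz : z ≠ 0) : c y = c z := by
    have hy' := Submodule.mem_span_singleton_self (R := k) y
    by_cases hzy : z ∈ k ∙ y
    · obtain ⟨w, hw⟩ := exists_notMem_span_singleton hV y
      exact (hpair (linearIndependent_pair_of_mem_span_singleton hy' hy hw)).trans
        (hpair (linearIndependent_pair_of_mem_span_singleton hzy hz hw)).symm
    · exact hpair (linearIndependent_pair_of_mem_span_singleton hy' hy hzy)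
  have := rank_pos_iff_nontrivial.1 (zero_lt_one.trans hV)
  obtain ⟨y₀, hy₀⟩ := exists_ne (0 : V)
  refine ⟨c y₀, fun y => ?_⟩
  rcases eq_or_ne y 0 with rfl | hy
  · simp
  · rw [← hc y, hconst hy hy₀]

variable {G : V ≃ V}

theorem PreservesCollinear.linearIndependent_pair_map (hG' : PreservesCollinear k G.symm)
    (hG0 : G 0 = 0) {u v : V} (huv : LinearIndependent k ![u, v]) :
    LinearIndependent k ![G u, G v] := by
  rw [linearIndependent_pair_iff_not_collinear] at huv ⊢
  intro hcol
  apply huv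
  simpa using hG' (G 0) (G u) (G v) (by rwa [hG0])

variable [NeZero (2 : k)]

theorem PreservesCollinear.exists_map_add_eq_smul_add (hG : PreservesCollinear k G)
    (hG' : PreservesCollinear k G.symm) (hG0 : G 0 = 0) {u v : V}
    (huv : LinearIndependent k ![u, v]) : ∃ α : k, G (u + v) = α • G u + G v := by
  have hmem : G (u + v) ∈ Submodule.span k {G u, G v} := by
    rw [← Set.image_pair]
    exact hG.map_mem_span G.injective hG0 (Submodule.mem_span_pair.2 ⟨1, 1, by simp⟩)
  obtain ⟨α, β, hαβ⟩ := Submodule.mem_span_pair.1 hmem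
  refine ⟨α, ?_⟩
  obtain rfl | hβ := eq_or_ne β 1
  · rw [← hαβ, one_smul]
  -- otherwise the lines `G v, G (u + v)` and `0, G u` meet, but `G.symm` maps them into the
  -- disjoint lines `v, u + v` and `0, u`
  have h1β : 1 - β ≠ 0 := sub_ne_zero.2 hβ.symm
  have hu0 : u ≠ 0 := huv.ne_zero 0
  set y := (α / (1 - β)) • G u
  have hy₁ : y ∈ line[k, G v, G (u + v)] := by
    refine mem_affineSpan_pair_iff_exists_lineMap_eq.2 ⟨1 / (1 - β), ?_⟩
    rw [AffineMap.lineMap_apply_module', ← hαβ]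
    match_scalars
    · field_simp
    · field_simp
      ring
  have hy₂ : y ∈ line[k, G 0, G u] := by
    refine mem_affineSpan_pair_iff_exists_lineMap_eq.2 ⟨α / (1 - β), ?_⟩
    simp [AffineMap.lineMap_apply_module', hG0, y]
  have hvu : G v ≠ G (u + v) := G.injective.ne (by simpa [eq_comm] using hu0)
  have h₁ := hG'.map_mem_affineSpan_pair G.symm.injective hvu hy₁
  have h₂ := hG'.map_mem_affineSpan_pair G.symm.injective (G.injective.ne hu0.symm) hy₂
  simp only [Equiv.symm_apply_apply] at h₁ h₂
  obtain ⟨r, hr⟩ := mem_affineSpan_pair_iff_exists_lineMap_eq.1 h₁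
  obtain ⟨s, hs⟩ := mem_affineSpan_pair_iff_exists_lineMap_eq.1 h₂
  rw [AffineMap.lineMap_apply_module', add_sub_cancel_right] at hr
  rw [AffineMap.lineMap_apply_module', sub_zero, add_zero] at hs
  have hdep : (r - s) • u + (1 : k) • v = 0 := by
    rw [sub_smul, one_smul, sub_add_eq_add_sub, hr, hs, sub_self]
  exact absurd (LinearIndependent.pair_iff.1 huv _ _ hdep).2 one_ne_zero

theorem PreservesCollinear.map_add_of_linearIndependent (hG : PreservesCollinear k G)
    (hG' : PreservesCollinear k G.symm) (hG0 : G 0 = 0) {u v : V}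
    (huv : LinearIndependent k ![u, v]) : G (u + v) = G u + G v := by
  obtain ⟨α, hα⟩ := hG.exists_map_add_eq_smul_add hG' hG0 huv
  obtain ⟨β, hβ⟩ := hG.exists_map_add_eq_smul_add hG' hG0 (LinearIndependent.pair_symm_iff.1 huv)
  have hsum : (α - 1) • G u + (1 - β) • G v = 0 := by
    have hswap : α • G u + G v = β • G v + G u := by rw [← hα, ← hβ, add_comm]
    linear_combination (norm := module) hswap
  obtain ⟨h, -⟩ := LinearIndependent.pair_iff.1 (hG'.linearIndependent_pair_map hG0 huv) _ _ hsum
  rw [hα, sub_eq_zero.1 h, one_smul]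

theorem PreservesCollinear.map_add (hV : 1 < Module.rank k V) (hG : PreservesCollinear k G)
    (hG' : PreservesCollinear k G.symm) (hG0 : G 0 = 0) (u v : V) : G (u + v) = G u + G v := by
  have key {x w : V} (hx : x ∈ k ∙ u) (hw : w ∉ k ∙ u) : G (x + w) = G x + G w := by
    rcases eq_or_ne x 0 with rfl | hx0
    · rw [zero_add, hG0, zero_add]
    · exact hG.map_add_of_linearIndependent hG' hG0
        (linearIndependent_pair_of_mem_span_singleton hx hx0 hw)
  have hu := Submodule.mem_span_singleton_self (R := k) u
  by_cases hv : v ∈ k ∙ u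
  · -- `u` and `v` are parallel: route the sum through a vector `w` off their common line
    obtain ⟨w, hw⟩ := exists_notMem_span_singleton hV u
    have hvw : v + w ∉ k ∙ u := fun h => hw (by simpa using Submodule.sub_mem _ h hv)
    apply add_right_cancel (b := G w)
    calc G (u + v) + G w = G (u + v + w) := (key (Submodule.add_mem _ hu hv) hw).symm
      _ = G u + G (v + w) := by rw [add_assoc, key hu hvw]
      _ = G u + G v + G w := by rw [key hv hw, add_assoc]
  · exact key hu hv

theorem PreservesCollinear.exists_ringHom_map_smul (hV : 1 < Module.rank k V)
    (hG : PreservesCollinear k G) (hG' : PreservesCollinear k G.symm) (hG0 : G 0 = 0) :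
    ∃ σ : k →+* k, ∀ (t : k) (x : V), G (t • x) = σ t • G x := by
  let Gₐ : V ≃+ V := { G with map_add' := hG.map_add hV hG' hG0 }
  have hscale (t : k) : ∃ c : k, ∀ y, G (t • G.symm y) = c • y := by
    refine (Gₐ.toAddMonoidHom.comp ((DistribSMul.toAddMonoidHom V t).comp
      Gₐ.symm.toAddMonoidHom)).exists_eq_smul_of_forall_mem_span_singleton hV fun y => ?_
    simpa [Gₐ] using hG.map_mem_span G.injective hG0
      (Submodule.smul_mem _ t (Submodule.mem_span_singleton_self (G.symm y)))
  choose σ hσ using hscale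
  have hσG (t : k) (x : V) : G (t • x) = σ t • G x := by simpa using hσ t (G x)
  have := rank_pos_iff_nontrivial.1 (zero_lt_one.trans hV)
  obtain ⟨x₀, hx₀⟩ := exists_ne (0 : V)
  have hinj := smul_left_injective k (G.injective.ne hx₀ |>.trans_eq hG0 : G x₀ ≠ 0)
  refine ⟨{ toFun := σ, map_one' := ?_, map_mul' := ?_, map_zero' := ?_, map_add' := ?_ },
    hσG⟩
  · exact hinj (by simp [← hσG])
  · exact fun s t => hinj (by simp [← hσG, mul_smul])
  · exact hinj (by simp [← hσG, hG0])
  · exact fun s t => hinj (by simp [← hσG, add_smul, hG.map_add hV hG' hG0])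

end Semilinear

theorem PreservesCollinear.isLinearMap {V : Type*} [AddCommGroup V] [Module ℝ V]
    [FiniteDimensional ℝ V] (hdim : 2 ≤ finrank ℝ V) {G : V ≃ V} (hG : PreservesCollinear ℝ G)
    (hG0 : G 0 = 0) : IsLinearMap ℝ G := by
  have hV : 1 < Module.rank ℝ V := by exact_mod_cast lt_rank_of_lt_finrank hdim
  obtain ⟨σ, hσ⟩ := hG.exists_ringHom_map_smul hV hG.symm hG0
  refine ⟨hG.map_add hV hG.symm hG0, fun t x => ?_⟩
  -- the identity is the only ring endomorphism of `ℝ`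
  rw [hσ, Subsingleton.elim σ (RingHom.id ℝ), RingHom.id_apply]

/-- **main theorem of affine geometry.** A bijective collineation of a real
affine space of dimension `≥ 2` (and finite) is an affine map: there is a linear map
`f : V → V` with `F (v +ᵥ p) = f v +ᵥ F p` for all points `p` and vectors `v`. -/
theorem bijective_collineation_affine
    {V S : Type*} [AddCommGroup V] [Module ℝ V] [AddTorsor V S]
    [FiniteDimensional ℝ V] (hdim : 2 ≤ Module.finrank ℝ V)
    (F : S → S) (hbij : Function.Bijective F)
    (hcol : ∀ p q r : S, Collinear ℝ ({p, q, r} : Set S) →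
      Collinear ℝ ({F p, F q, F r} : Set S)) :
    ∃ f : V →ₗ[ℝ] V, ∀ (p : S) (v : V), F (v +ᵥ p) = f v +ᵥ F p := by
  obtain ⟨o⟩ : Nonempty S := inferInstance
  let e₁ := AffineEquiv.vaddConst ℝ o
  let e₂ := AffineEquiv.vaddConst ℝ (F o)
  let G : V ≃ V := (e₁.toEquiv.trans (Equiv.ofBijective F hbij)).trans e₂.symm.toEquiv
  have hG : PreservesCollinear ℝ G :=
    (e₂.symm.toAffineMap.preservesCollinear.comp hcol).comp e₁.toAffineMap.preservesCollinear
  have hF (x : V) : F (x +ᵥ o) = G x +ᵥ F o := (vsub_vadd _ _).symm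
  have hlin := hG.isLinearMap hdim (vadd_right_cancel (F o) (by rw [← hF, zero_vadd, zero_vadd]))
  refine ⟨hlin.mk' G, fun p v => ?_⟩
  calc F (v +ᵥ p) = F ((v + (p -ᵥ o)) +ᵥ o) := by rw [add_vadd, vsub_vadd]
    _ = G v +ᵥ (G (p -ᵥ o) +ᵥ F o) := by rw [hF, hlin.map_add, add_vadd]
    _ = hlin.mk' G v +ᵥ F p := by rw [← hF, vsub_vadd]; rfl
end

section
/- Let V be a real vector space of finite dimension n ≥ 2 and let g be a nondegenerate symmetric bilinear form on V of signature (1, n−1). Let h be any symmetric bilinear form on V such that every vector v with g(v, v) = 0 also satisfies h(v, v) = 0 (i.e. the light cone of g is contained in the null cone of h). Then there exists α ∈ ℝ with h = α·g. -/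
/-!
Put `α := h(e₀, e₀)`. The symmetric form `k := h - α • g` still vanishes on the light cone
of `g`, and in addition `k(e₀, e₀) = 0`. Whenever `u ⊥ w` with `g(u, u) = -g(w, w)`, both
`u ± w` are null, so `k(u, w) = 0` and `k(u, u) + k(w, w) = 0`. Taking `u = e₀, w = eᵢ` kills
`k(e₀, eᵢ)` and `k(eᵢ, eᵢ)`; taking `u = 5 e₀, w = 3 eᵢ + 4 eⱼ` (as `5² = 3² + 4²`) then kills
`k(eᵢ, eⱼ)`. Hence `k = 0`.
-/

namespace LinearMap.BilinForm

variable {V : Type*} [AddCommGroup V] [Module ℝ V] {g k : LinearMap.BilinForm ℝ V}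

theorem apply_eq_zero_and_add_eq_zero_of_vanishes_on_lightCone (hg : g.IsSymm) (hk : k.IsSymm)
    (hnull : ∀ v, g v v = 0 → k v v = 0) {u w : V} (horth : g u w = 0)
    (hnorm : g u u = -g w w) : k u w = 0 ∧ k u u + k w w = 0 := by
  have hplus : g (u + w) (u + w) = 0 := by
    simp only [map_add, LinearMap.add_apply, hg.eq w u, horth, hnorm]; ring
  have hminus : g (u - w) (u - w) = 0 := by
    simp only [map_sub, LinearMap.sub_apply, hg.eq w u, horth, hnorm]; ring
  have kplus := hnull _ hplus
  have kminus := hnull _ hminus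
  simp only [map_add, map_sub, LinearMap.add_apply, LinearMap.sub_apply, hk.eq w u] at kplus kminus
  constructor <;> linarith

variable {n : ℕ} [NeZero n] {e : Module.Basis (Fin n) ℝ V}

theorem apply_basis_eq_zero_of_vanishes_on_lightCone (hg : g.IsSymm)
    (hsig : ∀ i j, g (e i) (e j) = if i = j then (if (i : ℕ) = 0 then 1 else -1) else 0)
    (hk : k.IsSymm) (hnull : ∀ v, g v v = 0 → k v v = 0) (hk₀ : k (e 0) (e 0) = 0)
    (i j : Fin n) : k (e i) (e j) = 0 := by
  have hspace (i : Fin n) (hi : i ≠ 0) : k (e 0) (e i) = 0 ∧ k (e i) (e i) = 0 := by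
    have := apply_eq_zero_and_add_eq_zero_of_vanishes_on_lightCone hg hk hnull (u := e 0)
      (w := e i) (by simp [hsig, hi.symm]) (by simp [hsig, hi])
    exact ⟨this.1, by linarith [this.2]⟩
  rcases eq_or_ne i 0 with rfl | hi
  · rcases eq_or_ne j 0 with rfl | hj
    · exact hk₀
    · exact (hspace j hj).1
  rcases eq_or_ne j 0 with rfl | hj
  · rw [hk.eq]; exact (hspace i hi).1
  rcases eq_or_ne i j with rfl | hij
  · exact (hspace i hi).2
  have key := (apply_eq_zero_and_add_eq_zero_of_vanishes_on_lightCone hg hk hnull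
    (u := (5 : ℝ) • e 0) (w := (3 : ℝ) • e i + (4 : ℝ) • e j)
    (by simp [hsig, hi.symm, hj.symm]) (by simp [hsig, hi, hj, hij, hij.symm]; norm_num)).2
  simp only [map_add, map_smul, LinearMap.add_apply, LinearMap.smul_apply, smul_eq_mul, hk₀,
    (hspace i hi).2, (hspace j hj).2, hk.eq (e j) (e i)] at key
  linarith

end LinearMap.BilinForm

/-- Let `g` be a nondegenerate symmetric bilinear form of signature
`(1, n−1)` on an `n`-dimensional real vector space (`n ≥ 2`), exhibited by a basis `e`
with `g(e_a, e_b) = diag(1, −1, …, −1)`. If a symmetric bilinear form `h` vanishes on the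
light cone of `g`, then `h = α·g` for some real `α`. -/
theorem lightcone_determines_form
    {V : Type*} [AddCommGroup V] [Module ℝ V]
    {n : ℕ} (hn : 2 ≤ n)
    (g h : V →ₗ[ℝ] V →ₗ[ℝ] ℝ)
    (hgsymm : ∀ v w : V, g v w = g w v)
    (hhsymm : ∀ v w : V, h v w = h w v)
    (e : Module.Basis (Fin n) ℝ V)
    (hsig : ∀ i j, g (e i) (e j) =
      if i = j then (if (i : ℕ) = 0 then 1 else -1) else 0)
    (hnull : ∀ v : V, g v v = 0 → h v v = 0) :
    ∃ α : ℝ, ∀ v w : V, h v w = α * g v w := by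
  have : NeZero n := ⟨by omega⟩
  have hg : LinearMap.BilinForm.IsSymm g := LinearMap.BilinForm.isSymm_def.mpr hgsymm
  set α := h (e 0) (e 0)
  have hk₀ : (h - α • g) (e 0) (e 0) = 0 := by simp [α, hsig]
  have hk : h - α • g = 0 := e.ext fun i => e.ext fun j =>
    LinearMap.BilinForm.apply_basis_eq_zero_of_vanishes_on_lightCone hg hsig
      ((LinearMap.BilinForm.isSymm_def.mpr hhsymm).sub (hg.smul α))
      (fun v hv => by simp [hnull v hv, hv]) hk₀ i j
  exact ⟨α, fun v w => sub_eq_zero.mp (by simpa using congr($hk v w))⟩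
end

section
/- Let V be a real vector space of finite dimension n ≥ 2 with a nondegenerate symmetric bilinear form g of signature (1, n−1). Let f : V → V be a linear map such that g(v, v) = 0 implies g(f(v), f(v)) = 0 for all v, and such that there exists a timelike vector v₀ (g(v₀, v₀) > 0) with f(v₀) timelike. Then there exists λ > 0 such that g(f(v), f(w)) = λ²·g(v, w) for all v, w ∈ V; that is, f is the composition of a Lorentz transformation with the dilation by λ. -/
/-!
Let `Q v w := g (f v) (f w)`. In a `g`-orthonormal basis `e₀, …, eₙ₋₁` with `e₀` timelike,
the null vectors `e₀ ± eᵢ` force `Q e₀ eᵢ = 0` and `Q eᵢ eᵢ = -Q e₀ e₀`, and the null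
vector `5 e₀ + 3 eᵢ + 4 eⱼ` then forces `Q eᵢ eⱼ = 0`. Hence `Q = c • g` with
`c = Q e₀ e₀`, the timelike vector `v₀` gives `c > 0`, and `λ = √c`.
-/

namespace LinearMap.BilinForm

variable {V : Type*} [AddCommGroup V] [Module ℝ V] {B Q : LinearMap.BilinForm ℝ V} {u x y : V}

theorem apply_eq_zero_and_apply_self_eq_neg_of_null_imp_null
    (hB : ∀ v w, B v w = B w v) (hQ : ∀ v w, Q v w = Q w v)
    (hnull : ∀ v, B v v = 0 → Q v v = 0)
    (hu : B u u = 1) (hx : B x x = -1) (hux : B u x = 0) :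
    Q u x = 0 ∧ Q x x = -Q u u := by
  have hxu : B x u = 0 := hB x u ▸ hux
  have hplus : Q (u + x) (u + x) = 0 := hnull _ <| by
    simp only [map_add, LinearMap.add_apply, hu, hx, hux, hxu]; norm_num
  have hminus : Q (u - x) (u - x) = 0 := hnull _ <| by
    simp only [map_sub, LinearMap.sub_apply, hu, hx, hux, hxu]; norm_num
  simp only [map_add, map_sub, LinearMap.add_apply, LinearMap.sub_apply, hQ x u] at hplus hminus
  constructor <;> linarith

theorem apply_eq_zero_of_null_imp_null
    (hB : ∀ v w, B v w = B w v) (hQ : ∀ v w, Q v w = Q w v)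
    (hnull : ∀ v, B v v = 0 → Q v v = 0)
    (hu : B u u = 1) (hx : B x x = -1) (hy : B y y = -1)
    (hux : B u x = 0) (huy : B u y = 0) (hxy : B x y = 0) :
    Q x y = 0 := by
  obtain ⟨hQux, hQxx⟩ :=
    apply_eq_zero_and_apply_self_eq_neg_of_null_imp_null hB hQ hnull hu hx hux
  obtain ⟨hQuy, hQyy⟩ :=
    apply_eq_zero_and_apply_self_eq_neg_of_null_imp_null hB hQ hnull hu hy huy
  -- `5² = 3² + 4²` gives a null vector with rational coefficients.
  have hcone := hnull ((5 : ℝ) • u + (3 : ℝ) • x + (4 : ℝ) • y) <| by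
    simp only [map_add, map_smul, LinearMap.add_apply, LinearMap.smul_apply, smul_eq_mul,
      hB x u, hB y u, hB y x, hu, hx, hy, hux, huy, hxy]
    norm_num
  simp only [map_add, map_smul, LinearMap.add_apply, LinearMap.smul_apply, smul_eq_mul,
    hQ x u, hQ y u, hQ y x, hQux, hQuy, hQxx, hQyy] at hcone
  linarith

theorem eq_smul_of_null_imp_null {ι : Type*} [DecidableEq ι]
    (e : Module.Basis ι ℝ V) (i₀ : ι)
    (he : ∀ i j, B (e i) (e j) = if i = j then (if i = i₀ then 1 else -1) else 0)
    (hB : ∀ v w, B v w = B w v) (hQ : ∀ v w, Q v w = Q w v)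
    (hnull : ∀ v, B v v = 0 → Q v v = 0) :
    Q = Q (e i₀) (e i₀) • B := by
  have h₀ : B (e i₀) (e i₀) = 1 := by simp [he]
  have hself {i} (hi : i ≠ i₀) : B (e i) (e i) = -1 := by simp [he, hi]
  have hoff {i j} (hij : i ≠ j) : B (e i) (e j) = 0 := by simp [he, hij]
  have hQ₀ {i} (hi : i ≠ i₀) : Q (e i₀) (e i) = 0 ∧ Q (e i) (e i) = -Q (e i₀) (e i₀) :=
    apply_eq_zero_and_apply_self_eq_neg_of_null_imp_null hB hQ hnull h₀ (hself hi) (hoff hi.symm)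
  refine ext_basis e fun i j => ?_
  rw [LinearMap.smul_apply, LinearMap.smul_apply, smul_eq_mul]
  rcases eq_or_ne i i₀ with rfl | hi <;> rcases eq_or_ne j i with rfl | hji
  · rw [h₀, mul_one]
  · rw [(hQ₀ hji).1, hoff hji.symm, mul_zero]
  · rw [(hQ₀ hi).2, hself hi]; ring
  · rcases eq_or_ne j i₀ with rfl | hj
    · rw [hQ, (hQ₀ hi).1, hoff hji.symm, mul_zero]
    · rw [hoff hji.symm, mul_zero, apply_eq_zero_of_null_imp_null hB hQ hnull h₀ (hself hi)
        (hself hj) (hoff hi.symm) (hoff hj.symm) (hoff hji.symm)]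

end LinearMap.BilinForm

/-- Let `g` be a nondegenerate symmetric bilinear form of signature
`(1, n−1)` on an `n`-dimensional real vector space (`n ≥ 2`). A linear map `f`
mapping the light cone of `g` into itself, and mapping some timelike vector to a
timelike vector, is the composition of a Lorentz transformation with a dilation:
`g(f v, f w) = λ² g(v, w)` for some `λ > 0`. -/
theorem lightcone_preserving_linear_is_lorentz_dilation
    {V : Type*} [AddCommGroup V] [Module ℝ V]
    {n : ℕ} (hn : 2 ≤ n)
    (g : V →ₗ[ℝ] V →ₗ[ℝ] ℝ)
    (hgsymm : ∀ v w : V, g v w = g w v)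
    (e : Module.Basis (Fin n) ℝ V)
    (hsig : ∀ i j, g (e i) (e j) =
      if i = j then (if (i : ℕ) = 0 then 1 else -1) else 0)
    (f : V →ₗ[ℝ] V)
    (hnull : ∀ v : V, g v v = 0 → g (f v) (f v) = 0)
    (v₀ : V) (hv₀ : 0 < g v₀ v₀) (hfv₀ : 0 < g (f v₀) (f v₀)) :
    ∃ lam : ℝ, 0 < lam ∧ ∀ v w : V, g (f v) (f w) = lam ^ 2 * g v w := by
  set i₀ : Fin n := ⟨0, by omega⟩
  set c := g (f (e i₀)) (f (e i₀))
  have he (i j : Fin n) : g (e i) (e j) = if i = j then (if i = i₀ then 1 else -1) else 0 := by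
    simp [hsig, i₀, Fin.ext_iff]
  have hQ : g.compl₁₂ f f = c • g :=
    LinearMap.BilinForm.eq_smul_of_null_imp_null e i₀ he hgsymm
      (fun v w => hgsymm (f v) (f w)) hnull
  have hQ_apply (v w : V) : g (f v) (f w) = c * g v w := LinearMap.congr_fun₂ hQ v w
  have hc : 0 < c := pos_of_mul_pos_left (hQ_apply v₀ v₀ ▸ hfv₀) hv₀.le
  exact ⟨√c, Real.sqrt_pos.2 hc, fun v w => by rw [Real.sq_sqrt hc.le, hQ_apply]⟩
end

section
/- The lattice Caus(Mⁿ) of causally complete subsets of Minkowski space Mⁿ (n ≥ 2) is not orthomodular: there exist causally complete subsets a, b ⊆ Mⁿ with a ⊆ b such that a ≠ b ∩ (a ∪ b')'', i.e. the orthomodular identity a = b ∧ (a ∨ b') fails, where the meet is intersection, the join of two causally complete sets is the causal completion of their union, and ' is the causal complement. -/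
/-- The causal complement `S'` of a subset `S` of Minkowski space: the set of points
spacelike separated from every point of `S`. -/
def causalCompl {n : ℕ} (S : Set (Fin n → ℝ)) : Set (Fin n → ℝ) :=
  {x | ∀ p ∈ S, minkG (x - p) (x - p) < 0}

/-!
Take `a = {0}` (the null segment of length `0`) and `b` the null segment from `0` to
`ℓ = e₀ + e₁` (`nullPlus`). Every point of `b'' = b` is lightlike to `0 ∈ a`, so `(a ∪ b')' = a' ∩ b''` is
empty; hence `a ∨ b' = ∅'` is the whole space and `b ∧ (a ∨ b') = b ≠ a`.

A null segment `S` is causally complete because every `x ∉ S` has a point `q ∈ S'` with `x - q`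
null or zero: shift `x` along `ℓ` if `x⁰ ≠ x¹`; take `q = x` if `x⁰ = x¹` and `x` is spacelike;
otherwise `x` lies on the line `ℝℓ` outside `S`, and `x` is shifted along `e₀ - e₁`.
-/

section CausalComplement

variable {n : ℕ}

lemma minkG_neg_neg (v w : Fin n → ℝ) : minkG (-v) (-w) = minkG v w := by
  simp [minkG]

lemma minkG_zero_zero : minkG (0 : Fin n → ℝ) 0 = 0 := by
  simp [minkG]

lemma subset_causalCompl_causalCompl (S : Set (Fin n → ℝ)) :
    S ⊆ causalCompl (causalCompl S) := fun x hx p hp => by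
  simpa only [← neg_sub x p, minkG_neg_neg] using hp x hx

lemma causalCompl_union (S T : Set (Fin n → ℝ)) :
    causalCompl (S ∪ T) = causalCompl S ∩ causalCompl T := by
  ext x
  simp [causalCompl, or_imp, forall_and]

lemma causalCompl_empty : causalCompl (∅ : Set (Fin n → ℝ)) = Set.univ := by
  ext x
  simp [causalCompl]

lemma notMem_causalCompl_causalCompl_of_sub_mem {S : Set (Fin n → ℝ)} {x v : Fin n → ℝ}
    (hv : 0 ≤ minkG v v) (h : x - v ∈ causalCompl S) :
    x ∉ causalCompl (causalCompl S) := fun hx => by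
  have hneg := hx _ h
  rw [sub_sub_cancel] at hneg
  exact hneg.not_ge hv

end CausalComplement

section NullSegment

variable {m : ℕ}

def nullPlus (m : ℕ) : Fin (m + 2) → ℝ := Matrix.vecCons 1 (Matrix.vecCons 1 0)

def nullMinus (m : ℕ) : Fin (m + 2) → ℝ := Matrix.vecCons 1 (Matrix.vecCons (-1) 0)

@[simp] lemma nullPlus_zero : nullPlus m 0 = 1 := rfl
@[simp] lemma nullPlus_one : nullPlus m 1 = 1 := rfl
@[simp] lemma nullPlus_succ_succ (i : Fin m) : nullPlus m i.succ.succ = 0 := rfl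
@[simp] lemma nullMinus_zero : nullMinus m 0 = 1 := rfl
@[simp] lemma nullMinus_one : nullMinus m 1 = -1 := rfl
@[simp] lemma nullMinus_succ_succ (i : Fin m) : nullMinus m i.succ.succ = 0 := rfl

def nullSegment (m : ℕ) (t : ℝ) : Set (Fin (m + 2) → ℝ) := (· • nullPlus m) '' Set.Icc 0 t

lemma nullSegment_mono : Monotone (nullSegment m) := fun _ _ hst =>
  Set.image_mono (Set.Icc_subset_Icc_right hst)

lemma nullSegment_zero_ne {t : ℝ} (ht : 0 < t) : nullSegment m 0 ≠ nullSegment m t := by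
  intro h
  obtain ⟨s, hs, hst⟩ : t • nullPlus m ∈ nullSegment m 0 := h ▸ ⟨t, ⟨ht.le, le_rfl⟩, rfl⟩
  have hst0 := congrFun hst 0
  simp only [Pi.smul_apply, nullPlus_zero, smul_eq_mul, mul_one] at hst0
  linarith [hs.2]

noncomputable def tailNormSq (x : Fin (m + 2) → ℝ) : ℝ := ∑ i : Fin m, x i.succ.succ ^ 2

lemma minkG_self_eq_s17 (x : Fin (m + 2) → ℝ) :
    minkG x x = x 0 ^ 2 - x 1 ^ 2 - tailNormSq x := by
  simp only [minkG, Fin.val_eq_zero_iff, Fin.sum_univ_succ, ↓reduceIte, Fin.succ_ne_zero,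
    Finset.sum_neg_distrib, Fin.succ_zero_eq_one, sq, tailNormSq]
  ring

lemma minkG_self_sub_smul_nullPlus_sub_smul_nullMinus (x : Fin (m + 2) → ℝ) (α β : ℝ) :
    minkG (x - α • nullPlus m - β • nullMinus m) (x - α • nullPlus m - β • nullMinus m) =
      minkG x x - 2 * α * (x 0 - x 1) - 2 * β * (x 0 + x 1) + 4 * α * β := by
  have htail : tailNormSq (x - α • nullPlus m - β • nullMinus m) = tailNormSq x := by
    simp [tailNormSq]
  rw [minkG_self_eq_s17, minkG_self_eq_s17, htail]
  simp only [Pi.sub_apply, Pi.smul_apply, smul_eq_mul, nullPlus_zero, nullPlus_one,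
    nullMinus_zero, nullMinus_one]
  ring

lemma minkG_self_sub_smul_nullPlus (x : Fin (m + 2) → ℝ) (α : ℝ) :
    minkG (x - α • nullPlus m) (x - α • nullPlus m) = minkG x x - 2 * α * (x 0 - x 1) := by
  simpa using minkG_self_sub_smul_nullPlus_sub_smul_nullMinus x α 0

lemma minkG_self_smul_nullPlus (α : ℝ) : minkG (α • nullPlus m) (α • nullPlus m) = 0 := by
  simp [minkG_self_eq_s17, tailNormSq]

lemma minkG_self_smul_nullMinus (β : ℝ) : minkG (β • nullMinus m) (β • nullMinus m) = 0 := by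
  simp [minkG_self_eq_s17, tailNormSq]

lemma minkG_self_neg_or_eq_smul_nullPlus {x : Fin (m + 2) → ℝ} (h01 : x 0 = x 1) :
    minkG x x < 0 ∨ x = x 0 • nullPlus m := by
  rw [minkG_self_eq_s17, h01, sub_self, zero_sub, neg_neg_iff_pos]
  refine (Finset.sum_nonneg fun i _ => sq_nonneg (x i.succ.succ)).lt_or_eq.imp id fun h => ?_
  have htail := (Finset.sum_eq_zero_iff_of_nonneg fun i _ => sq_nonneg (x i.succ.succ)).1 h.symm
  funext i
  refine Fin.cases ?_ (Fin.cases ?_ fun i => ?_) i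
  · simp [h01]
  · simp [Fin.succ_zero_eq_one]
  · simpa using htail i (Finset.mem_univ i)

lemma mem_causalCompl_nullSegment_iff {y : Fin (m + 2) → ℝ} {t : ℝ} :
    y ∈ causalCompl (nullSegment m t) ↔
      ∀ s ∈ Set.Icc 0 t, minkG (y - s • nullPlus m) (y - s • nullPlus m) < 0 :=
  Set.forall_mem_image

lemma exists_sub_smul_nullPlus_mem_causalCompl_nullSegment {x : Fin (m + 2) → ℝ} (t : ℝ)
    (h01 : x 0 ≠ x 1) : ∃ r : ℝ, x - r • nullPlus m ∈ causalCompl (nullSegment m t) := by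
  obtain ⟨d, hd, hd0⟩ : ∃ d, x 0 - x 1 = d ∧ d ≠ 0 := ⟨_, rfl, sub_ne_zero.2 h01⟩
  -- `r` makes `minkG (x - (r + s) • ℓ) (x - (r + s) • ℓ) = -2d² - 2t² - 2sd`
  refine ⟨(minkG x x + 2 * d ^ 2 + 2 * t ^ 2) / (2 * d), mem_causalCompl_nullSegment_iff.2 ?_⟩
  rintro s ⟨hs0, hst⟩
  have hr : 2 * ((minkG x x + 2 * d ^ 2 + 2 * t ^ 2) / (2 * d) + s) * d =
      minkG x x + 2 * d ^ 2 + 2 * t ^ 2 + 2 * s * d := by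
    field_simp
  rw [sub_sub, ← add_smul, minkG_self_sub_smul_nullPlus, hd, hr]
  nlinarith [sq_nonneg (d + s), sq_pos_of_ne_zero hd0, mul_le_mul hst hst hs0 (hs0.trans hst)]

lemma mem_causalCompl_nullSegment_of_minkG_self_neg {x : Fin (m + 2) → ℝ} (t : ℝ)
    (h01 : x 0 = x 1) (hx : minkG x x < 0) : x ∈ causalCompl (nullSegment m t) :=
  mem_causalCompl_nullSegment_iff.2 fun s _ => by
    rwa [minkG_self_sub_smul_nullPlus, h01, sub_self, mul_zero, sub_zero]

lemma smul_nullPlus_sub_smul_nullMinus_mem_causalCompl_nullSegment {a t : ℝ}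
    (ha : a ∉ Set.Icc 0 t) :
    a • nullPlus m - (a - t / 2) • nullMinus m ∈ causalCompl (nullSegment m t) := by
  -- the square is `-4 (a - t/2) (a - s)`, and `a - t/2`, `a - s` have the same sign
  refine mem_causalCompl_nullSegment_iff.2 fun s ⟨hs0, hst⟩ => ?_
  rw [sub_right_comm, minkG_self_sub_smul_nullPlus_sub_smul_nullMinus, minkG_self_smul_nullPlus]
  simp only [Pi.smul_apply, nullPlus_zero, nullPlus_one, smul_eq_mul, mul_one, sub_self]
  rw [Set.mem_Icc, not_and_or, not_le, not_le] at ha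
  rcases ha with ha | ha <;> nlinarith

lemma exists_null_sub_mem_causalCompl_nullSegment {x : Fin (m + 2) → ℝ} {t : ℝ}
    (hx : x ∉ nullSegment m t) :
    ∃ v, minkG v v = 0 ∧ x - v ∈ causalCompl (nullSegment m t) := by
  by_cases h01 : x 0 = x 1
  · rcases minkG_self_neg_or_eq_smul_nullPlus h01 with hneg | hx_eq
    · exact ⟨0, minkG_zero_zero, by
        simpa using mem_causalCompl_nullSegment_of_minkG_self_neg t h01 hneg⟩
    · have ha : x 0 ∉ Set.Icc 0 t := fun ha => hx ⟨x 0, ha, hx_eq.symm⟩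
      refine ⟨(x 0 - t / 2) • nullMinus m, minkG_self_smul_nullMinus _, ?_⟩
      have hmem := smul_nullPlus_sub_smul_nullMinus_mem_causalCompl_nullSegment (m := m) ha
      rwa [← hx_eq] at hmem
  · obtain ⟨r, hr⟩ := exists_sub_smul_nullPlus_mem_causalCompl_nullSegment t h01
    exact ⟨r • nullPlus m, minkG_self_smul_nullPlus r, hr⟩

lemma causalCompl_causalCompl_nullSegment (t : ℝ) :
    causalCompl (causalCompl (nullSegment m t)) = nullSegment m t := by
  refine (subset_causalCompl_causalCompl _).antisymm' fun x hx => ?_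
  by_contra hxS
  obtain ⟨v, hv, hmem⟩ := exists_null_sub_mem_causalCompl_nullSegment hxS
  exact notMem_causalCompl_causalCompl_of_sub_mem hv.ge hmem hx

lemma causalCompl_nullSegment_zero_union_causalCompl_nullSegment (t : ℝ) :
    causalCompl (nullSegment m 0 ∪ causalCompl (nullSegment m t)) = ∅ := by
  rw [causalCompl_union, causalCompl_causalCompl_nullSegment, Set.eq_empty_iff_forall_notMem]
  rintro _ ⟨h0, s, -, rfl⟩
  have hnull := h0 0 ⟨0, Set.left_mem_Icc.2 le_rfl, zero_smul ℝ _⟩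
  rw [sub_zero, minkG_self_smul_nullPlus] at hnull
  exact hnull.false

end NullSegment

/-- The lattice of causally complete subsets of Minkowski space `Mⁿ`
(`n ≥ 2`) is not orthomodular: there are causally complete sets `a ⊆ b` with
`a ≠ b ∧ (a ∨ b') = b ∩ ((a ∪ b')'')`. -/
theorem caus_not_orthomodular (m : ℕ) :
    ∃ a b : Set (Fin (m + 2) → ℝ),
      causalCompl (causalCompl a) = a ∧
      causalCompl (causalCompl b) = b ∧
      a ⊆ b ∧
      a ≠ b ∩ causalCompl (causalCompl (a ∪ causalCompl b)) := by
  refine ⟨nullSegment m 0, nullSegment m 1, causalCompl_causalCompl_nullSegment 0,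
    causalCompl_causalCompl_nullSegment 1, nullSegment_mono zero_le_one, ?_⟩
  rw [causalCompl_nullSegment_zero_union_causalCompl_nullSegment, causalCompl_empty,
    Set.inter_univ]
  exact nullSegment_zero_ne one_pos
end
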